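/- arXiv:2210.06766 — 8 statements merged into one kernel-verified Lean document; each statement's English description precedes it below -/
import Mathlib

section
/- For all probability measures μ₁, μ₂ on A one has ‖μ₁κ − μ₂κ‖_TV ≤ (1 − ε)·‖μ₁ − μ₂‖_TV; that is, the map μ ↦ μκ is a contraction with factor (1 − ε) in total variation distance on the set of probability measures on A. -/
open MeasureTheory ProbabilityTheory

/-- Total variation distance between two measures:
`‖μ − ν‖_TV = sup {|μ(B) − ν(B)| : B measurable}`. -/
noncomputable def tvDist {α : Type*} [MeasurableSpace α] (μ ν : Measure α) : ℝ :=
  ⨆ B : {s : Set α // MeasurableSet s}, |(μ B.1).toReal - (ν B.1).toReal|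

lemma tvDist_bddAbove {α : Type*} [MeasurableSpace α]
    (μ ν : Measure α) [IsProbabilityMeasure μ] [IsProbabilityMeasure ν] :
    BddAbove (Set.range fun B : {s : Set α // MeasurableSet s} =>
      |(μ B.1).toReal - (ν B.1).toReal|) := by
  refine ⟨1, ?_⟩
  rintro x ⟨B, rfl⟩
  have h1 : (μ B.1).toReal ≤ 1 := by
    simpa using ENNReal.toReal_mono ENNReal.one_ne_top (prob_le_one (μ := μ) (s := B.1))
  have h2 : (ν B.1).toReal ≤ 1 := by
    simpa using ENNReal.toReal_mono ENNReal.one_ne_top (prob_le_one (μ := ν) (s := B.1))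
  have h3 : 0 ≤ (μ B.1).toReal := ENNReal.toReal_nonneg
  have h4 : 0 ≤ (ν B.1).toReal := ENNReal.toReal_nonneg
  rw [abs_le]
  constructor <;> linarith

lemma abs_integral_sub_le_tvDist {α : Type*} [MeasurableSpace α]
    (μ₁ μ₂ : Measure α) [IsProbabilityMeasure μ₁] [IsProbabilityMeasure μ₂]
    {f : α → ℝ} (hf : Measurable f) {a b : ℝ}
    (hfa : ∀ x, a ≤ f x) (hfb : ∀ x, f x ≤ b) :
    |∫ x, f x ∂μ₁ - ∫ x, f x ∂μ₂| ≤ (b - a) * tvDist μ₁ μ₂ := by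
  have hne : Nonempty α := by
    rcases isEmpty_or_nonempty α with h | h
    · have h1 : (μ₁ : Measure α) Set.univ = 1 := measure_univ
      rw [Set.univ_eq_empty_iff.mpr h, measure_empty] at h1
      exact absurd h1.symm one_ne_zero
    · exact h
  have hab : a ≤ b := le_trans (hfa hne.some) (hfb hne.some)
  -- integrability
  have hint : ∀ (μ : Measure α) [IsFiniteMeasure μ], Integrable f μ := by
    intro μ _
    refine (integrable_const (max |a| |b|)).mono' hf.aestronglyMeasurable ?_
    filter_upwards with x
    rw [Real.norm_eq_abs, abs_le]
    constructor
    · have := hfa x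
      have : -|a| ≤ a := neg_abs_le a
      have : -(max |a| |b|) ≤ -|a| := by
        simp [le_max_left]
      linarith [hfa x, neg_abs_le a]
    · exact le_trans (hfb x) (le_trans (le_abs_self b) (le_max_right _ _))
  obtain ⟨s, hs, hs₁, hs₂⟩ := hahn_decomposition (μ := μ₁) (ν := μ₂)
  have hle : μ₂.restrict s ≤ μ₁.restrict s := by
    rw [Measure.le_iff]
    intro t ht
    rw [Measure.restrict_apply ht, Measure.restrict_apply ht]
    exact hs₁ _ (ht.inter hs) Set.inter_subset_right
  have hle' : μ₁.restrict sᶜ ≤ μ₂.restrict sᶜ := by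
    rw [Measure.le_iff]
    intro t ht
    rw [Measure.restrict_apply ht, Measure.restrict_apply ht]
    exact hs₂ _ (ht.inter hs.compl) Set.inter_subset_right
  set ρ := μ₁.restrict s - μ₂.restrict s with hρdef
  set ρ' := μ₂.restrict sᶜ - μ₁.restrict sᶜ with hρ'def
  have hρ : μ₁.restrict s = μ₂.restrict s + ρ := by
    rw [hρdef, add_comm, Measure.sub_add_cancel_of_le hle]
  have hρ' : μ₂.restrict sᶜ = μ₁.restrict sᶜ + ρ' := by
    rw [hρ'def, add_comm, Measure.sub_add_cancel_of_le hle']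
  -- measure values
  have h21 : μ₂ s ≤ μ₁ s := hs₁ s hs subset_rfl
  have hδρ : (ρ Set.univ).toReal = (μ₁ s).toReal - (μ₂ s).toReal := by
    rw [hρdef, Measure.sub_apply MeasurableSet.univ hle,
      Measure.restrict_apply_univ, Measure.restrict_apply_univ,
      ENNReal.toReal_sub_of_le h21 (measure_ne_top _ _)]
  have hcompl : ∀ (μ : Measure α) [IsProbabilityMeasure μ],
      (μ sᶜ).toReal = 1 - (μ s).toReal := by
    intro μ _
    rw [measure_compl hs (measure_ne_top _ _), measure_univ,
      ENNReal.toReal_sub_of_le prob_le_one ENNReal.one_ne_top, ENNReal.toReal_one]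
  have hδρ' : (ρ' Set.univ).toReal = (μ₁ s).toReal - (μ₂ s).toReal := by
    rw [hρ'def, Measure.sub_apply MeasurableSet.univ hle',
      Measure.restrict_apply_univ, Measure.restrict_apply_univ,
      ENNReal.toReal_sub_of_le (hs₂ sᶜ hs.compl subset_rfl) (measure_ne_top _ _),
      hcompl μ₁, hcompl μ₂]
    ring
  set δ := (μ₁ s).toReal - (μ₂ s).toReal with hδdef
  have hδ0 : 0 ≤ δ := by
    rw [hδdef]
    have := ENNReal.toReal_mono (measure_ne_top μ₁ s) h21
    linarith
  have hδtv : δ ≤ tvDist μ₁ μ₂ := by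
    refine le_trans (le_abs_self δ) ?_
    exact le_ciSup (tvDist_bddAbove μ₁ μ₂) (⟨s, hs⟩ : {t : Set α // MeasurableSet t})
  -- decompose integrals
  have hdiff : ∫ x, f x ∂μ₁ - ∫ x, f x ∂μ₂ = ∫ x, f x ∂ρ - ∫ x, f x ∂ρ' := by
    have e1 : ∫ x, f x ∂μ₁ = ∫ x, f x ∂(μ₁.restrict s) + ∫ x, f x ∂(μ₁.restrict sᶜ) :=
      (integral_add_compl hs (hint μ₁)).symm
    have e2 : ∫ x, f x ∂μ₂ = ∫ x, f x ∂(μ₂.restrict s) + ∫ x, f x ∂(μ₂.restrict sᶜ) :=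
      (integral_add_compl hs (hint μ₂)).symm
    have e3 : ∫ x, f x ∂(μ₁.restrict s)
        = ∫ x, f x ∂(μ₂.restrict s) + ∫ x, f x ∂ρ := by
      rw [hρ]; exact integral_add_measure (hint _) (hint _)
    have e4 : ∫ x, f x ∂(μ₂.restrict sᶜ)
        = ∫ x, f x ∂(μ₁.restrict sᶜ) + ∫ x, f x ∂ρ' := by
      rw [hρ']; exact integral_add_measure (hint _) (hint _)
    rw [e1, e2, e3, e4]; ring
  -- bounds on ∫ f dρ and ∫ f dρ'
  have hbound : ∀ (m : Measure α) [IsFiniteMeasure m],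
      a * (m Set.univ).toReal ≤ ∫ x, f x ∂m ∧ ∫ x, f x ∂m ≤ b * (m Set.univ).toReal := by
    intro m _
    constructor
    · calc a * (m Set.univ).toReal = ∫ _, a ∂m := by
            rw [integral_const, smul_eq_mul, Measure.real]; ring
        _ ≤ ∫ x, f x ∂m := integral_mono (integrable_const a) (hint m) hfa
    · calc ∫ x, f x ∂m ≤ ∫ _, b ∂m := integral_mono (hint m) (integrable_const b) hfb
        _ = b * (m Set.univ).toReal := by rw [integral_const, smul_eq_mul, Measure.real]; ring
  obtain ⟨hρa, hρb⟩ := hbound ρ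
  obtain ⟨hρ'a, hρ'b⟩ := hbound ρ'
  rw [hδρ] at hρa hρb
  rw [hδρ'] at hρ'a hρ'b
  rw [hdiff, abs_le]
  constructor
  · nlinarith
  · nlinarith

/-- Under the Doeblin minorization condition
`κ(a, B) ≥ ε·ν(B)` (with `ε ∈ (0,1]`), the map `μ ↦ μκ` is a contraction with factor
`(1 − ε)` in total variation distance on probability measures. -/
theorem doeblin_tv_contraction
    {α : Type*} [MeasurableSpace α]
    (κ : Kernel α α) [IsMarkovKernel κ]
    (ν : Measure α) [IsProbabilityMeasure ν]
    (ε : ℝ) (hε0 : 0 < ε) (hε1 : ε ≤ 1)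
    (hmin : ∀ a : α, ∀ B : Set α, MeasurableSet B → ENNReal.ofReal ε * ν B ≤ κ a B)
    (μ₁ μ₂ : Measure α) [IsProbabilityMeasure μ₁] [IsProbabilityMeasure μ₂] :
    tvDist (μ₁.bind (κ ·)) (μ₂.bind (κ ·)) ≤ (1 - ε) * tvDist μ₁ μ₂ := by
  rw [tvDist]
  apply ciSup_le
  rintro ⟨B, hB⟩
  simp only
  set f : α → ℝ := fun x => (κ x B).toReal with hfdef
  have hκB : ∀ (μ : Measure α) [IsProbabilityMeasure μ],
      ((μ.bind (κ ·)) B).toReal = ∫ x, f x ∂μ := by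
    intro μ _
    rw [Measure.bind_apply hB κ.measurable.aemeasurable]
    rw [hfdef]
    exact (integral_toReal ((κ.measurable_coe hB).aemeasurable)
      (Filter.Eventually.of_forall fun x => measure_lt_top _ _)).symm
  rw [hκB μ₁, hκB μ₂]
  have hf : Measurable f := (κ.measurable_coe hB).ennreal_toReal
  have hmin' : ∀ (x : α) (C : Set α), MeasurableSet C → ε * (ν C).toReal ≤ (κ x C).toReal := by
    intro x C hC
    have := ENNReal.toReal_mono (measure_ne_top _ _) (hmin x C hC)
    rwa [ENNReal.toReal_mul, ENNReal.toReal_ofReal hε0.le] at this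
  have hfa : ∀ x, ε * (ν B).toReal ≤ f x := fun x => hmin' x B hB
  have hcompl : ∀ (μ : Measure α) [IsProbabilityMeasure μ],
      (μ Bᶜ).toReal = 1 - (μ B).toReal := by
    intro μ _
    rw [measure_compl hB (measure_ne_top _ _), measure_univ,
      ENNReal.toReal_sub_of_le prob_le_one ENNReal.one_ne_top, ENNReal.toReal_one]
  have hfb : ∀ x, f x ≤ 1 - ε * (ν Bᶜ).toReal := by
    intro x
    have h1 := hmin' x Bᶜ hB.compl
    have h2 : (κ x Bᶜ).toReal = 1 - (κ x B).toReal := hcompl (κ x)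
    rw [hfdef]
    simp only
    linarith
  have key := abs_integral_sub_le_tvDist μ₁ μ₂ hf hfa hfb
  have heq : (1 - ε * (ν Bᶜ).toReal) - ε * (ν B).toReal = 1 - ε := by
    rw [hcompl ν]; ring
  rw [heq] at key
  exact key
end

section
/- There exists a unique probability measure π^s on A that is stationary for κ, i.e. such that π^s κ = π^s (equivalently, π^s(B) = ∫_A κ(a, B) π^s(da) for every measurable B ⊆ A). -/
open MeasureTheory ProbabilityTheory Filter
open scoped ENNReal

namespace DoeblinAux

variable {α : Type*} [MeasurableSpace α]

lemma bind_lin (μ μ2 : Measure α) (f : α → Measure α) (hf : Measurable f) (c d : ℝ≥0∞) :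
    (c • μ + d • μ2).bind f = c • μ.bind f + d • μ2.bind f := by
  ext B hB
  simp [Measure.bind_apply hB hf.aemeasurable, lintegral_add_measure, lintegral_smul_measure]

lemma iter_lin (T : Measure α → Measure α)
    (hT : ∀ (μ μ2 : Measure α) (c d : ℝ≥0∞), T (c • μ + d • μ2) = c • T μ + d • T μ2)
    (n : ℕ) (μ μ2 : Measure α) (c d : ℝ≥0∞) :
    T^[n] (c • μ + d • μ2) = c • T^[n] μ + d • T^[n] μ2 := by
  induction n generalizing μ μ2 with
  | zero => simp
  | succ n ih =>
    rw [Function.iterate_succ_apply, Function.iterate_succ_apply,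
      Function.iterate_succ_apply, hT, ih]

end DoeblinAux

/-- Under the Doeblin minorization condition
`κ(a, B) ≥ ε·ν(B)` for all `a ∈ A` and measurable `B` (with `ε ∈ (0,1]`), there exists
a unique probability measure `π^s` on `A` that is stationary for `κ`, i.e. `π^s κ = π^s`. -/
theorem doeblin_exists_unique_stationary
    {α : Type*} [MeasurableSpace α]
    (κ : Kernel α α) [IsMarkovKernel κ]
    (ν : Measure α) [IsProbabilityMeasure ν]
    (ε : ℝ) (hε0 : 0 < ε) (hε1 : ε ≤ 1)
    (hmin : ∀ a : α, ∀ B : Set α, MeasurableSet B → ENNReal.ofReal ε * ν B ≤ κ a B) :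
    ∃! πs : Measure α, IsProbabilityMeasure πs ∧ πs.bind (κ ·) = πs := by
  set e : ℝ≥0∞ := ENNReal.ofReal ε with he_def
  have he0 : e ≠ 0 := by
    simp only [he_def, ne_eq, ENNReal.ofReal_eq_zero, not_le]
    exact hε0
  have he1 : e ≤ 1 := by
    simpa [he_def] using ENNReal.ofReal_le_one.2 hε1
  have hetop : e ≠ ⊤ := ENNReal.ofReal_ne_top
  have hmin' : ∀ a B, MeasurableSet B → e * ν B ≤ κ a B := fun a B hB => hmin a B hB
  have hκmeas : Measurable (κ ·) := κ.measurable
  rcases eq_or_lt_of_le he1 with heq | hlt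
  · -- case e = 1 : then κ a = ν for all a
    have hκ : ∀ a : α, κ a = ν := by
      intro a
      ext B hB
      have h1 : ν B ≤ κ a B := by
        have := hmin' a B hB; rwa [heq, one_mul] at this
      have h2 : ν Bᶜ ≤ κ a Bᶜ := by
        have := hmin' a Bᶜ hB.compl; rwa [heq, one_mul] at this
      have hν : ν B + ν Bᶜ = 1 := by rw [measure_add_measure_compl hB]; simp
      have hκa : κ a B + κ a Bᶜ = 1 := by rw [measure_add_measure_compl hB]; simp
      refine le_antisymm ?_ h1
      have e1 : κ a B = 1 - κ a Bᶜ :=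
        ENNReal.eq_sub_of_add_eq (measure_ne_top _ _) hκa
      have e2 : ν B = 1 - ν Bᶜ :=
        ENNReal.eq_sub_of_add_eq (measure_ne_top _ _) hν
      rw [e1, e2]
      exact tsub_le_tsub_left h2 1
    have hconst : (κ ·) = fun _ : α => ν := funext hκ
    refine ⟨ν, ⟨inferInstance, ?_⟩, ?_⟩
    · simp only [hκ, Measure.bind_const, measure_univ, one_smul]
    · rintro ρ ⟨hρp, hρs⟩
      rw [← hρs]
      simp only [hκ, Measure.bind_const, measure_univ, one_smul]
  · -- case e < 1
    have h1e0 : (1 : ℝ≥0∞) - e ≠ 0 := by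
      simp only [ne_eq, tsub_eq_zero_iff_le, not_le]
      exact hlt
    have h1etop : (1 : ℝ≥0∞) - e ≠ ⊤ := by
      exact ne_top_of_le_ne_top ENNReal.one_ne_top tsub_le_self
    have hle : ∀ a, e • ν ≤ κ a := by
      intro a
      refine Measure.le_iff.2 fun B hB => ?_
      simpa using hmin' a B hB
    haveI : IsFiniteMeasure (e • ν) := by
      constructor
      simp only [Measure.smul_apply, smul_eq_mul, measure_univ, mul_one]
      exact lt_of_le_of_lt hlt.le ENNReal.one_lt_top
    set r : α → Measure α := fun a => (1 - e)⁻¹ • (κ a - e • ν) with hr_def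
    have hr_apply : ∀ a B, MeasurableSet B → r a B = (1 - e)⁻¹ * (κ a B - e * ν B) := by
      intro a B hB
      simp [hr_def, Measure.sub_apply hB (hle a)]
    have hr_meas : Measurable r := by
      apply Measure.measurable_of_measurable_coe
      intro B hB
      have : (fun a => r a B) = fun a => (1 - e)⁻¹ * (κ a B - e * ν B) :=
        funext fun a => hr_apply a B hB
      rw [this]
      exact ((κ.measurable_coe hB).sub measurable_const).const_mul _
    have hr_univ : ∀ a, r a Set.univ = 1 := by
      intro a
      rw [hr_apply a _ MeasurableSet.univ]
      simp only [measure_univ, mul_one]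
      exact ENNReal.inv_mul_cancel h1e0 h1etop
    have hdec : ∀ a B, MeasurableSet B → κ a B = e * ν B + (1 - e) * r a B := by
      intro a B hB
      rw [hr_apply a B hB, ← mul_assoc, ENNReal.mul_inv_cancel h1e0 h1etop, one_mul,
        add_tsub_cancel_of_le (hmin' a B hB)]
    set T : Measure α → Measure α := fun μ => μ.bind r with hT_def
    have hT_apply : ∀ (μ : Measure α) B, MeasurableSet B → (T μ) B = ∫⁻ a, r a B ∂μ :=
      fun μ B hB => Measure.bind_apply hB hr_meas.aemeasurable
    have hT_univ : ∀ μ : Measure α, (T μ) Set.univ = μ Set.univ := by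
      intro μ
      rw [hT_apply μ _ MeasurableSet.univ]
      simp [hr_univ]
    have hT_lin : ∀ (μ μ2 : Measure α) (c d : ℝ≥0∞), T (c • μ + d • μ2) = c • T μ + d • T μ2 :=
      fun μ μ2 c d => DoeblinAux.bind_lin μ μ2 r hr_meas c d
    set g : ℕ → Measure α := fun n => T^[n] ν with hg_def
    have hg_succ : ∀ n, g (n + 1) = T (g n) := by
      intro n
      simp only [hg_def, Function.iterate_succ_apply' T n ν]
    have hg_univ : ∀ n, g n Set.univ = 1 := by
      intro n
      induction n with
      | zero => simp [hg_def]
      | succ n ih => rw [hg_succ n, hT_univ, ih]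
    have hg_le_one : ∀ n B, g n B ≤ 1 := by
      intro n B
      calc g n B ≤ g n Set.univ := measure_mono (Set.subset_univ B)
      _ = 1 := hg_univ n
    set π : Measure α := Measure.sum (fun n => (e * (1 - e) ^ n) • g n) with hπ_def
    have hπ_apply : ∀ B, MeasurableSet B → π B = ∑' n, e * (1 - e) ^ n * g n B := by
      intro B hB
      rw [hπ_def, Measure.sum_apply _ hB]
      simp [Measure.smul_apply, smul_eq_mul]
    have hgeom : ∑' n : ℕ, e * (1 - e) ^ n = 1 := by
      rw [ENNReal.tsum_mul_left, ENNReal.tsum_geometric, ENNReal.sub_sub_cancel ENNReal.one_ne_top he1,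
        ENNReal.mul_inv_cancel he0 hetop]
    haveI hπ_prob : IsProbabilityMeasure π := by
      constructor
      rw [hπ_apply _ MeasurableSet.univ]
      simp only [hg_univ, mul_one]
      exact hgeom
    -- the partial sums
    set S : ℕ → Measure α := fun n => ∑ k ∈ Finset.range n, (e * (1 - e) ^ k) • g k with hS_def
    have hS_apply : ∀ n B, (S n) B = ∑ k ∈ Finset.range n, e * (1 - e) ^ k * g k B := by
      intro n B
      simp [hS_def, Measure.finset_sum_apply, Measure.smul_apply, smul_eq_mul]
    -- bounds on π B in terms of partial sums
    have hπ_lb : ∀ n B, MeasurableSet B → (S n) B ≤ π B := by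
      intro n B hB
      rw [hπ_apply B hB, hS_apply]
      exact ENNReal.sum_le_tsum (Finset.range n)
    have hπ_ub : ∀ n B, MeasurableSet B → π B ≤ (S n) B + (1 - e) ^ n := by
      intro n B hB
      rw [hπ_apply B hB, hS_apply,
        ← Summable.sum_add_tsum_nat_add' (f := fun k => e * (1 - e) ^ k * g k B) (k := n) ENNReal.summable]
      refine add_le_add le_rfl ?_
      calc (∑' k, e * (1 - e) ^ (k + n) * g (k + n) B)
          ≤ ∑' k : ℕ, (1 - e) ^ n * (e * (1 - e) ^ k) := by
            refine ENNReal.tsum_le_tsum fun k => ?_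
            calc e * (1 - e) ^ (k + n) * g (k + n) B ≤ e * (1 - e) ^ (k + n) * 1 :=
              mul_le_mul_right (hg_le_one _ _) _
            _ = (1 - e) ^ n * (e * (1 - e) ^ k) := by ring
      _ = (1 - e) ^ n := by
            rw [ENNReal.tsum_mul_left, hgeom, mul_one]
    -- decomposition of any stationary probability measure
    have hstat_dec : ∀ ρ : Measure α, IsProbabilityMeasure ρ → ρ.bind (κ ·) = ρ →
        ρ = e • ν + (1 - e) • T ρ := by
      intro ρ hρp hρs
      ext B hB
      conv_lhs => rw [← hρs]
      rw [Measure.bind_apply hB hκmeas.aemeasurable]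
      have hintegrand : (fun a => κ a B) = fun a => e * ν B + (1 - e) * r a B :=
        funext fun a => hdec a B hB
      have hrB : Measurable (fun a => r a B) := (Measure.measurable_coe hB).comp hr_meas
      rw [hintegrand, lintegral_add_left measurable_const, lintegral_const, measure_univ, mul_one,
        lintegral_const_mul _ hrB]
      simp [Measure.add_apply, Measure.smul_apply, hT_apply ρ B hB, smul_eq_mul]
    -- π is stationary
    have hπ_stat : π.bind (κ ·) = π := by
      ext B hB
      rw [Measure.bind_apply hB hκmeas.aemeasurable]
      have hintegrand : (fun a => κ a B) = fun a => e * ν B + (1 - e) * r a B :=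
        funext fun a => hdec a B hB
      have hrB : Measurable (fun a => r a B) := (Measure.measurable_coe hB).comp hr_meas
      rw [hintegrand, lintegral_add_left measurable_const, lintegral_const, measure_univ, mul_one,
        lintegral_const_mul _ hrB]
      have hsum : ∫⁻ a, r a B ∂π = ∑' n, e * (1 - e) ^ n * g (n + 1) B := by
        rw [hπ_def, lintegral_sum_measure]
        congr 1
        funext n
        rw [lintegral_smul_measure, hg_succ n, hT_apply (g n) B hB, smul_eq_mul]
      have hg0 : g 0 = ν := rfl
      have hshift : ∑' n, e * (1 - e) ^ n * g n B
          = e * ν B + ∑' n, (1 - e) * (e * (1 - e) ^ n * g (n + 1) B) := by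
        rw [tsum_eq_zero_add' ENNReal.summable]
        congr 1
        · simp [hg0]
        · exact tsum_congr fun n => by ring
      rw [hsum, hπ_apply B hB, hshift, ENNReal.tsum_mul_left]
    -- key identity for stationary probability measures
    have hkey : ∀ ρ : Measure α, IsProbabilityMeasure ρ → ρ.bind (κ ·) = ρ →
        ∀ n, ρ = S n + (1 - e) ^ n • T^[n] ρ := by
      intro ρ hρp hρs n
      induction n with
      | zero => simp [hS_def]
      | succ n ih =>
        have hdecρ := hstat_dec ρ hρp hρs
        calc ρ = S n + (1 - e) ^ n • T^[n] ρ := ih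
        _ = S n + (1 - e) ^ n • T^[n] (e • ν + (1 - e) • T ρ) := by rw [← hdecρ]
        _ = S n + (1 - e) ^ n • (e • T^[n] ν + (1 - e) • T^[n] (T ρ)) := by
              rw [DoeblinAux.iter_lin T hT_lin n ν (T ρ) e (1 - e)]
        _ = S (n + 1) + (1 - e) ^ (n + 1) • T^[n + 1] ρ := by
              have hgn : T^[n] ν = g n := rfl
              have hS1 : S (n + 1) = S n + (e * (1 - e) ^ n) • g n := by
                simp [hS_def, Finset.sum_range_succ]
              rw [smul_add, smul_smul, smul_smul, ← add_assoc, hS1, hgn,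
                Function.iterate_succ_apply, mul_comm ((1 - e) ^ n) e, ← pow_succ]
    have hTit_univ : ∀ (ρ : Measure α) n, ρ Set.univ = 1 → (T^[n] ρ) Set.univ = 1 := by
      intro ρ n hρ
      induction n with
      | zero => simpa
      | succ n ih => rw [Function.iterate_succ_apply' T n ρ, hT_univ]; exact ih
    -- uniqueness bound
    have hlim : ∀ x y : ℝ≥0∞, (∀ n : ℕ, x ≤ y + (1 - e) ^ n) → x ≤ y := by
      intro x y h
      have h1lt : (1 : ℝ≥0∞) - e < 1 := ENNReal.sub_lt_self ENNReal.one_ne_top one_ne_zero he0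
      have htend : Tendsto (fun n : ℕ => y + (1 - e) ^ n) atTop (nhds y) := by
        have := (ENNReal.tendsto_pow_atTop_nhds_zero_of_lt_one h1lt).const_add y
        simpa using this
      exact ge_of_tendsto' htend h
    have heq_stat : ∀ ρ : Measure α, IsProbabilityMeasure ρ → ρ.bind (κ ·) = ρ → ρ = π := by
      intro ρ hρp hρs
      ext B hB
      have hρub : ∀ n, ρ B ≤ (S n) B + (1 - e) ^ n := by
        intro n
        have := hkey ρ hρp hρs n
        calc ρ B = (S n) B + (1 - e) ^ n * (T^[n] ρ) B := by
              conv_lhs => rw [this]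
              simp [Measure.smul_apply, smul_eq_mul]
        _ ≤ (S n) B + (1 - e) ^ n * 1 := by
              refine add_le_add le_rfl (mul_le_mul_right ?_ _)
              calc (T^[n] ρ) B ≤ (T^[n] ρ) Set.univ := measure_mono (Set.subset_univ B)
              _ = 1 := hTit_univ ρ n (by simp)
        _ = (S n) B + (1 - e) ^ n := by rw [mul_one]
      have hρlb : ∀ n, (S n) B ≤ ρ B := by
        intro n
        conv_rhs => rw [hkey ρ hρp hρs n]
        exact le_add_right le_rfl
      refine le_antisymm ?_ ?_
      · refine hlim _ _ fun n => ?_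
        exact le_trans (hρub n) (add_le_add (hπ_lb n B hB) le_rfl)
      · refine hlim _ _ fun n => ?_
        exact le_trans (hπ_ub n B hB) (add_le_add (hρlb n) le_rfl)
    exact ⟨π, ⟨hπ_prob, hπ_stat⟩, fun ρ ⟨hρp, hρs⟩ => heq_stat ρ hρp hρs⟩
end

section
/- Let π^s be the steady-state probability measure of the belief-transition kernel κ, let Q : A → ℝ be bounded and measurable with Q⁺ := sup_{a∈A} |Q(a)|, and define the n-step value functions Q_n(a) := ∫_A Q(a') κ^n(a, da') and the stationary value V := ∫_A Q dπ^s. Then sup_{a∈A} |Q_n(a) − V| ≤ 2·Q⁺·(1 − δ·m(A))^n for every n ≥ 1; i.e., the n-step value functions converge uniformly and exponentially fast to the constant stationary value. -/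
open MeasureTheory ProbabilityTheory ENNReal

lemma aux_integral_bind {α β : Type*} [MeasurableSpace α] [MeasurableSpace β]
    (μ : Measure α) [IsProbabilityMeasure μ] (κ : α → Measure β) (hκ : Measurable κ)
    (hκp : ∀ᵐ a ∂μ, IsProbabilityMeasure (κ a))
    (f : β → ℝ) (hf : Measurable f) (C : ℝ) (hC0 : 0 ≤ C) (hC : ∀ x, |f x| ≤ C) :
    ∫ x, f x ∂(μ.bind κ) = ∫ a, ∫ x, f x ∂(κ a) ∂μ := by
  have hg1 : Measurable fun x => ENNReal.ofReal (f x) := hf.ennreal_ofReal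
  have hg2 : Measurable fun x => ENNReal.ofReal (-(f x)) := hf.neg.ennreal_ofReal
  -- bounds on lintegrals over probability measures
  have hbound : ∀ (ν : Measure β), IsProbabilityMeasure ν → ∀ g : β → ℝ,
      (∀ x, |g x| ≤ C) → ∫⁻ x, ENNReal.ofReal (g x) ∂ν ≤ ENNReal.ofReal C := by
    intro ν hν g hg
    calc ∫⁻ x, ENNReal.ofReal (g x) ∂ν ≤ ∫⁻ _, ENNReal.ofReal C ∂ν :=
          lintegral_mono fun x => ENNReal.ofReal_le_ofReal ((abs_le.1 (hg x)).2)
      _ = ENNReal.ofReal C := by simp [lintegral_const]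
  have hint : ∀ (ν : Measure β), IsProbabilityMeasure ν → Integrable f ν := by
    intro ν hν
    exact (integrable_const C).mono' hf.aestronglyMeasurable
      (Filter.Eventually.of_forall fun x => by simpa using hC x)
  have heq : ∀ (ν : Measure β), IsProbabilityMeasure ν →
      ∫ x, f x ∂ν = (∫⁻ x, ENNReal.ofReal (f x) ∂ν).toReal
        - (∫⁻ x, ENNReal.ofReal (-(f x)) ∂ν).toReal := by
    intro ν hν
    exact integral_eq_lintegral_pos_part_sub_lintegral_neg_part (hint ν hν)
  -- bind is a probability measure
  have hbind_univ : (μ.bind κ) Set.univ = 1 := by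
    rw [Measure.bind_apply MeasurableSet.univ hκ.aemeasurable]
    rw [lintegral_congr_ae (hκp.mono fun a ha => ha.measure_univ)]
    simp
  haveI hbp : IsProbabilityMeasure (μ.bind κ) := ⟨hbind_univ⟩
  have hL1 : Measurable fun a => ∫⁻ x, ENNReal.ofReal (f x) ∂(κ a) :=
    (Measure.measurable_lintegral hg1).comp hκ
  have hL2 : Measurable fun a => ∫⁻ x, ENNReal.ofReal (-(f x)) ∂(κ a) :=
    (Measure.measurable_lintegral hg2).comp hκ
  have hL1b : ∀ᵐ a ∂μ, (∫⁻ x, ENNReal.ofReal (f x) ∂(κ a)) ≤ ENNReal.ofReal C :=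
    hκp.mono fun a ha => hbound _ ha f hC
  have hL2b : ∀ᵐ a ∂μ, (∫⁻ x, ENNReal.ofReal (-(f x)) ∂(κ a)) ≤ ENNReal.ofReal C :=
    hκp.mono fun a ha => hbound _ ha (fun x => -(f x)) (fun x => by simpa [abs_neg] using hC x)
  have hIL1 : Integrable (fun a => (∫⁻ x, ENNReal.ofReal (f x) ∂(κ a)).toReal) μ := by
    refine (integrable_const C).mono' hL1.ennreal_toReal.aestronglyMeasurable ?_
    refine hL1b.mono fun a ha => ?_
    rw [Real.norm_eq_abs, abs_of_nonneg ENNReal.toReal_nonneg]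
    exact (ENNReal.toReal_le_toReal (ne_top_of_le_ne_top ofReal_ne_top ha) ofReal_ne_top).2 ha
      |>.trans_eq (ENNReal.toReal_ofReal hC0)
  have hIL2 : Integrable (fun a => (∫⁻ x, ENNReal.ofReal (-(f x)) ∂(κ a)).toReal) μ := by
    refine (integrable_const C).mono' hL2.ennreal_toReal.aestronglyMeasurable ?_
    refine hL2b.mono fun a ha => ?_
    rw [Real.norm_eq_abs, abs_of_nonneg ENNReal.toReal_nonneg]
    exact (ENNReal.toReal_le_toReal (ne_top_of_le_ne_top ofReal_ne_top ha) ofReal_ne_top).2 ha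
      |>.trans_eq (ENNReal.toReal_ofReal hC0)
  calc ∫ x, f x ∂(μ.bind κ)
      = (∫⁻ x, ENNReal.ofReal (f x) ∂(μ.bind κ)).toReal
        - (∫⁻ x, ENNReal.ofReal (-(f x)) ∂(μ.bind κ)).toReal := heq _ hbp
    _ = (∫⁻ a, ∫⁻ x, ENNReal.ofReal (f x) ∂(κ a) ∂μ).toReal
        - (∫⁻ a, ∫⁻ x, ENNReal.ofReal (-(f x)) ∂(κ a) ∂μ).toReal := by
        rw [Measure.lintegral_bind hκ.aemeasurable hg1.aemeasurable, Measure.lintegral_bind hκ.aemeasurable hg2.aemeasurable]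
    _ = (∫ a, (∫⁻ x, ENNReal.ofReal (f x) ∂(κ a)).toReal ∂μ)
        - ∫ a, (∫⁻ x, ENNReal.ofReal (-(f x)) ∂(κ a)).toReal ∂μ := by
        rw [integral_toReal hL1.aemeasurable
            (hL1b.mono fun a ha => lt_of_le_of_lt ha ofReal_lt_top),
          integral_toReal hL2.aemeasurable
            (hL2b.mono fun a ha => lt_of_le_of_lt ha ofReal_lt_top)]
    _ = ∫ a, ((∫⁻ x, ENNReal.ofReal (f x) ∂(κ a)).toReal
        - (∫⁻ x, ENNReal.ofReal (-(f x)) ∂(κ a)).toReal) ∂μ := (integral_sub hIL1 hIL2).symm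
    _ = ∫ a, ∫ x, f x ∂(κ a) ∂μ := integral_congr_ae (hκp.mono fun a ha => (heq _ ha).symm)

/-- Let `π^s` be the steady-state probability measure of the
belief-transition kernel `κ` (a stationary probability measure concentrated on `A`),
`Q : A → ℝ` bounded measurable with `|Q| ≤ Q⁺` on `A`, `Q_n(a) = ∫ Q(a') κ^n(a, da')`
the n-step value functions and `V = ∫ Q dπ^s` the stationary value. Then
`sup_{a ∈ A} |Q_n(a) − V| ≤ 2·Q⁺·(1 − δ·m(A))^n` for every `n ≥ 1`: the n-step value
functions converge uniformly, exponentially fast, to the constant stationary value. -/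
theorem nstep_value_uniform_exponential_convergence
    (d : ℕ) (hd : 1 ≤ d)
    (A : Set (Fin d → ℝ)) (hA_compact : IsCompact A) (hA_pos : 0 < volume A)
    (κ : Kernel (Fin d → ℝ) (Fin d → ℝ))
    (hκ_prob : ∀ a ∈ A, IsProbabilityMeasure (κ a))
    (p : (Fin d → ℝ) → (Fin d → ℝ) → ℝ≥0∞)
    (hp_meas : Measurable (Function.uncurry p))
    (hκ_dens : ∀ a ∈ A, κ a = (volume.restrict A).withDensity (p a))
    (δ : ℝ) (hδ : 0 < δ)
    (hδ_inf : ∀ a ∈ A, ∀ a' ∈ A, ENNReal.ofReal δ ≤ p a a')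
    (πs : Measure (Fin d → ℝ)) [IsProbabilityMeasure πs]
    (hπs_supp : πs A = 1)
    (hstat : πs.bind (κ ·) = πs)
    (Q : (Fin d → ℝ) → ℝ) (hQ_meas : Measurable Q)
    (Qplus : ℝ) (hQ_bdd : ∀ a ∈ A, |Q a| ≤ Qplus) :
    ∀ n : ℕ, 1 ≤ n → ∀ a ∈ A,
      |(∫ a', Q a' ∂((fun m : Measure (Fin d → ℝ) => m.bind (κ ·))^[n] (Measure.dirac a)))
          - ∫ a', Q a' ∂πs|
        ≤ 2 * Qplus * (1 - δ * (volume A).toReal) ^ n := by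
  -- basic setup
  -- (no type abbreviation)
  have hAmeas : MeasurableSet A := hA_compact.isClosed.measurableSet
  have hAfin : volume A ≠ ⊤ := hA_compact.measure_lt_top.ne
  set μA : Measure (Fin d → ℝ) := volume.restrict A with hμA
  haveI : IsFiniteMeasure μA := ⟨by
    rw [hμA, Measure.restrict_apply_univ]; exact hA_compact.measure_lt_top⟩
  have hAne : A.Nonempty := nonempty_of_measure_ne_zero hA_pos.ne'
  set mA : ℝ := (volume A).toReal with hmA
  set r : ℝ := 1 - δ * mA with hr
  have hQplus0 : 0 ≤ Qplus := by
    obtain ⟨a0, ha0⟩ := hAne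
    exact (abs_nonneg _).trans (hQ_bdd a0 ha0)
  have hμA_univ : μA Set.univ = volume A := by rw [hμA, Measure.restrict_apply_univ]
  -- per-point density facts
  have hpa_meas : ∀ a, Measurable (p a) := fun a =>
    hp_meas.comp (measurable_prodMk_left)
  have hp1 : ∀ a ∈ A, ∫⁻ x, p a x ∂μA = 1 := by
    intro a ha
    have h := (hκ_prob a ha).measure_univ
    rw [hκ_dens a ha, withDensity_apply _ MeasurableSet.univ, Measure.restrict_univ] at h
    exact h
  have hρ_meas : ∀ a, Measurable fun x => (p a x).toReal := fun a =>
    (hpa_meas a).ennreal_toReal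
  have hρ_int : ∀ a ∈ A, Integrable (fun x => (p a x).toReal) μA := fun a ha =>
    integrable_toReal_of_lintegral_ne_top (hpa_meas a).aemeasurable (by rw [hp1 a ha]; exact one_ne_top)
  have hp_fin : ∀ a ∈ A, ∀ᵐ x ∂μA, p a x < ⊤ := fun a ha =>
    ae_lt_top (hpa_meas a) (by rw [hp1 a ha]; exact one_ne_top)
  have hρ_one : ∀ a ∈ A, ∫ x, (p a x).toReal ∂μA = 1 := by
    intro a ha
    rw [integral_toReal (hpa_meas a).aemeasurable (hp_fin a ha), hp1 a ha, ENNReal.toReal_one]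
  -- 0 ≤ r
  have hr0 : 0 ≤ r := by
    obtain ⟨a0, ha0⟩ := hAne
    have hle : ENNReal.ofReal δ * volume A ≤ 1 := by
      calc ENNReal.ofReal δ * volume A = ∫⁻ _, ENNReal.ofReal δ ∂μA := by
            rw [lintegral_const, hμA_univ]
        _ ≤ ∫⁻ x, p a0 x ∂μA := by
            refine lintegral_mono_ae ?_
            filter_upwards [ae_restrict_mem hAmeas] with x hx
            exact hδ_inf a0 ha0 x hx
        _ = 1 := hp1 a0 ha0
    have := ENNReal.toReal_mono one_ne_top hle
    rw [ENNReal.toReal_mul, ENNReal.toReal_ofReal hδ.le, ENNReal.toReal_one] at this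
    simp only [hr]; linarith
  -- the transition operator and iterated value functions
  set T : ((Fin d → ℝ) → ℝ) → ((Fin d → ℝ) → ℝ) :=
    fun f a => ∫ x, (p a x).toReal * f x ∂μA with hT
  set F : ℕ → (Fin d → ℝ) → ℝ :=
    fun n => (fun f => A.indicator (T f))^[n] (A.indicator Q) with hF
  have hF0 : F 0 = A.indicator Q := rfl
  have hFsucc : ∀ n, F (n + 1) = A.indicator (T (F n)) := fun n =>
    Function.iterate_succ_apply' (fun f => A.indicator (T f)) n (A.indicator Q)
  -- integrability of bounded measurable functions on μA
  have hbint : ∀ (f : (Fin d → ℝ) → ℝ) (B : ℝ), AEStronglyMeasurable f μA →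
      (∀ x, |f x| ≤ B) → Integrable f μA := by
    intro f B hfm hfb
    exact (integrable_const B).mono' hfm (Filter.Eventually.of_forall fun x => by simpa using hfb x)
  -- operator preserves bound
  have hTbd : ∀ (f : (Fin d → ℝ) → ℝ), Measurable f → (∀ x, |f x| ≤ Qplus) →
      ∀ a ∈ A, |T f a| ≤ Qplus := by
    intro f hfm hfb a ha
    have hint : Integrable (fun x => (p a x).toReal * f x) μA := by
      refine ((hρ_int a ha).mul_const Qplus).mono'
        ((hρ_meas a).mul hfm).aestronglyMeasurable
        (Filter.Eventually.of_forall fun x => ?_)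
      rw [Real.norm_eq_abs, abs_mul, abs_of_nonneg ENNReal.toReal_nonneg]
      exact mul_le_mul_of_nonneg_left (hfb x) ENNReal.toReal_nonneg
    have hint2 : Integrable (fun x => (p a x).toReal * |f x|) μA := by
      refine ((hρ_int a ha).mul_const Qplus).mono'
        ((hρ_meas a).mul hfm.abs).aestronglyMeasurable
        (Filter.Eventually.of_forall fun x => ?_)
      rw [Real.norm_eq_abs, abs_mul, abs_of_nonneg ENNReal.toReal_nonneg, abs_abs]
      exact mul_le_mul_of_nonneg_left (hfb x) ENNReal.toReal_nonneg
    calc |T f a| ≤ ∫ x, (p a x).toReal * |f x| ∂μA := by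
          simpa [Real.norm_eq_abs, abs_mul, abs_of_nonneg ENNReal.toReal_nonneg] using
            norm_integral_le_integral_norm (μ := μA) (fun x => (p a x).toReal * f x)
      _ ≤ ∫ x, (p a x).toReal * Qplus ∂μA := by
          refine integral_mono hint2 ((hρ_int a ha).mul_const Qplus) fun x => ?_
          exact mul_le_mul_of_nonneg_left (hfb x) ENNReal.toReal_nonneg
      _ = Qplus := by rw [integral_mul_const, hρ_one a ha, one_mul]
  -- operator contracts oscillation
  have hTosc : ∀ (f : (Fin d → ℝ) → ℝ), Measurable f → (∀ x, |f x| ≤ Qplus) →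
      ∀ c : ℝ, (∀ a ∈ A, ∀ b ∈ A, |f a - f b| ≤ c) →
      ∀ a ∈ A, ∀ b ∈ A, |T f a - T f b| ≤ r * c := by
    intro f hfm hfb c hosc a ha b hb
    set M : ℝ := sSup (f '' A) with hM
    set m' : ℝ := sInf (f '' A) with hm'
    have hne : (f '' A).Nonempty := hAne.image f
    have hbddA : BddAbove (f '' A) := ⟨Qplus, by
      rintro y ⟨x, hx, rfl⟩; exact (abs_le.1 (hfb x)).2⟩
    have hbddB : BddBelow (f '' A) := ⟨-Qplus, by
      rintro y ⟨x, hx, rfl⟩; exact (abs_le.1 (hfb x)).1⟩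
    have hfM : ∀ x ∈ A, f x ≤ M := fun x hx => le_csSup hbddA ⟨x, hx, rfl⟩
    have hmf : ∀ x ∈ A, m' ≤ f x := fun x hx => csInf_le hbddB ⟨x, hx, rfl⟩
    have hMm : M - m' ≤ c := by
      have h1 : ∀ x ∈ A, f x ≤ m' + c := by
        intro x hx
        have : f x - c ≤ m' := by
          refine le_csInf hne ?_
          rintro y ⟨z, hz, rfl⟩
          have := (abs_le.1 (hosc x hx z hz)).2
          linarith
        linarith
      have : M ≤ m' + c := csSup_le hne (by rintro y ⟨x, hx, rfl⟩; exact h1 x hx)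
      linarith
    -- decomposition with the minorizing density
    have hq_int : ∀ u ∈ A, Integrable (fun x => (p u x).toReal - δ) μA := fun u hu =>
      (hρ_int u hu).sub (integrable_const δ)
    have hq_nonneg : ∀ u ∈ A, ∀ᵐ x ∂μA, 0 ≤ (p u x).toReal - δ := by
      intro u hu
      filter_upwards [ae_restrict_mem hAmeas, hp_fin u hu] with x hx hfin
      have h1 : ENNReal.ofReal δ ≤ p u x := hδ_inf u hu x hx
      have h2 : (ENNReal.ofReal δ).toReal ≤ (p u x).toReal :=
        ENNReal.toReal_mono hfin.ne h1
      rw [ENNReal.toReal_ofReal hδ.le] at h2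
      linarith
    have hq_tot : ∀ u ∈ A, ∫ x, ((p u x).toReal - δ) ∂μA = r := by
      intro u hu
      rw [integral_sub (hρ_int u hu) (integrable_const δ), hρ_one u hu, integral_const,
        measureReal_def, hμA_univ, smul_eq_mul]
      rw [hr, hmA]; ring
    have hqf_int : ∀ u ∈ A, Integrable (fun x => ((p u x).toReal - δ) * f x) μA := by
      intro u hu
      refine ((hq_int u hu).abs.mul_const Qplus).mono'
        (((hρ_meas u).sub measurable_const).mul hfm).aestronglyMeasurable
        (Filter.Eventually.of_forall fun x => ?_)
      rw [Real.norm_eq_abs, abs_mul]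
      exact mul_le_mul_of_nonneg_left (hfb x) (abs_nonneg _)
    have hdecomp : ∀ u ∈ A, T f u = (∫ x, ((p u x).toReal - δ) * f x ∂μA) + δ * ∫ x, f x ∂μA := by
      intro u hu
      have : (fun x => (p u x).toReal * f x) =
          fun x => ((p u x).toReal - δ) * f x + δ * f x := by
        funext x; ring
      rw [hT]
      simp only [this]
      rw [integral_add (hqf_int u hu) ((hbint f Qplus hfm.aestronglyMeasurable hfb).const_mul δ),
        integral_const_mul]
    have hJub : ∀ u ∈ A, ∫ x, ((p u x).toReal - δ) * f x ∂μA ≤ r * M := by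
      intro u hu
      calc ∫ x, ((p u x).toReal - δ) * f x ∂μA
          ≤ ∫ x, ((p u x).toReal - δ) * M ∂μA := by
            refine integral_mono_ae (hqf_int u hu) ((hq_int u hu).mul_const M) ?_
            filter_upwards [hq_nonneg u hu, ae_restrict_mem hAmeas] with x hq hx
            exact mul_le_mul_of_nonneg_left (hfM x hx) hq
        _ = r * M := by rw [integral_mul_const, hq_tot u hu]
    have hJlb : ∀ u ∈ A, r * m' ≤ ∫ x, ((p u x).toReal - δ) * f x ∂μA := by
      intro u hu
      calc r * m' = ∫ x, ((p u x).toReal - δ) * m' ∂μA := by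
            rw [integral_mul_const, hq_tot u hu]
        _ ≤ ∫ x, ((p u x).toReal - δ) * f x ∂μA := by
            refine integral_mono_ae ((hq_int u hu).mul_const m') (hqf_int u hu) ?_
            filter_upwards [hq_nonneg u hu, ae_restrict_mem hAmeas] with x hq hx
            exact mul_le_mul_of_nonneg_left (hmf x hx) hq
    have hrMm : r * (M - m') ≤ r * c := mul_le_mul_of_nonneg_left hMm hr0
    have h1 := hJub a ha; have h2 := hJlb b hb
    have h3 := hJub b hb; have h4 := hJlb a ha
    rw [abs_le]
    constructor
    · rw [hdecomp a ha, hdecomp b hb]; nlinarith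
    · rw [hdecomp a ha, hdecomp b hb]; nlinarith
    -- strong measurability, bound, oscillation of F n
  have key : ∀ n, StronglyMeasurable (F n) ∧ (∀ x, |F n x| ≤ Qplus) ∧
      (∀ a ∈ A, ∀ b ∈ A, |F n a - F n b| ≤ 2 * Qplus * r ^ n) := by
    intro n
    induction n with
    | zero =>
      refine ⟨by rw [hF0]; exact (hQ_meas.indicator hAmeas).stronglyMeasurable, ?_, ?_⟩
      · intro x
        rw [hF0]
        by_cases hx : x ∈ A
        · rw [Set.indicator_of_mem hx]; exact hQ_bdd x hx
        · rw [Set.indicator_of_notMem hx]; simpa using hQplus0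
      · intro a ha b hb
        rw [hF0, Set.indicator_of_mem ha, Set.indicator_of_mem hb, pow_zero, mul_one]
        calc |Q a - Q b| ≤ |Q a| + |Q b| := abs_sub _ _
          _ ≤ 2 * Qplus := by
              have h1 := hQ_bdd a ha; have h2 := hQ_bdd b hb; linarith
    | succ n ih =>
      obtain ⟨ihm, ihb, iho⟩ := ih
      have hTm : StronglyMeasurable (T (F n)) := by
        have hsm : StronglyMeasurable fun z : (Fin d → ℝ) × (Fin d → ℝ) =>
            (p z.1 z.2).toReal * F n z.2 :=
          ((hp_meas.ennreal_toReal).mul (ihm.measurable.comp measurable_snd)).stronglyMeasurable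
        exact hsm.integral_prod_right'
      refine ⟨by rw [hFsucc n]; exact hTm.indicator hAmeas, ?_, ?_⟩
      · intro x
        rw [hFsucc n]
        by_cases hx : x ∈ A
        · rw [Set.indicator_of_mem hx]; exact hTbd (F n) ihm.measurable ihb x hx
        · rw [Set.indicator_of_notMem hx]; simpa using hQplus0
      · intro a ha b hb
        rw [hFsucc n, Set.indicator_of_mem ha, Set.indicator_of_mem hb]
        calc |T (F n) a - T (F n) b| ≤ r * (2 * Qplus * r ^ n) :=
              hTosc (F n) ihm.measurable ihb (2 * Qplus * r ^ n) iho a ha b hb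
          _ = 2 * Qplus * r ^ (n + 1) := by ring
  -- integral against the kernel equals the operator
  have hκint : ∀ (f : (Fin d → ℝ) → ℝ), Measurable f → ∀ a ∈ A,
      ∫ x, f x ∂(κ a) = T f a := by
    intro f hfm a ha
    have hcongr : μA.withDensity (p a) =
        μA.withDensity (fun x => ((p a x).toNNReal : ℝ≥0∞)) := by
      refine withDensity_congr_ae ?_
      filter_upwards [hp_fin a ha] with x hx
      exact (ENNReal.coe_toNNReal hx.ne).symm
    rw [hκ_dens a ha, hcongr,
      integral_withDensity_eq_integral_smul (hpa_meas a).ennreal_toNNReal f]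
    rfl
  -- a.e. membership helper
  have hmemA : ∀ (ν : Measure (Fin d → ℝ)), ν Aᶜ = 0 → ∀ᵐ x ∂ν, x ∈ A := by
    intro ν hν
    rw [ae_iff]
    simpa [Set.compl_def] using hν
  -- one step of the chain
  have hbind : ∀ μ : Measure (Fin d → ℝ), IsProbabilityMeasure μ → μ Aᶜ = 0 →
      IsProbabilityMeasure (μ.bind (κ ·)) ∧ (μ.bind (κ ·)) Aᶜ = 0 ∧
      ∀ n, ∫ x, F n x ∂(μ.bind (κ ·)) = ∫ a, F (n + 1) a ∂μ := by
    intro μ hμp hμc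
    haveI := hμp
    have hmem : ∀ᵐ a ∂μ, a ∈ A := hmemA μ hμc
    have hκm : Measurable (fun a => κ a) := κ.measurable
    have hκp : ∀ᵐ a ∂μ, IsProbabilityMeasure (κ a) := hmem.mono fun a ha => hκ_prob a ha
    have hprob : IsProbabilityMeasure (μ.bind (κ ·)) := by
      constructor
      rw [Measure.bind_apply MeasurableSet.univ hκm.aemeasurable,
        lintegral_congr_ae (hκp.mono fun a ha => ha.measure_univ)]
      simp
    have hcompl : (μ.bind (κ ·)) Aᶜ = 0 := by
      rw [Measure.bind_apply hAmeas.compl hκm.aemeasurable]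
      have hz : ∀ᵐ a ∂μ, κ a Aᶜ = 0 := by
        filter_upwards [hmem] with a ha
        rw [hκ_dens a ha, withDensity_apply _ hAmeas.compl, hμA,
          Measure.restrict_restrict hAmeas.compl, Set.compl_inter_self,
          Measure.restrict_empty, lintegral_zero_measure]
      rw [lintegral_congr_ae hz]
      simp
    refine ⟨hprob, hcompl, fun n => ?_⟩
    obtain ⟨hm, hb, -⟩ := key n
    rw [aux_integral_bind μ (fun a => κ a) hκm hκp (F n) hm.measurable Qplus hQplus0 hb]
    refine integral_congr_ae ?_
    filter_upwards [hmem] with a ha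
    rw [hκint (F n) hm.measurable a ha, hFsucc n, Set.indicator_of_mem ha]
  -- iterating the chain
  have hiter : ∀ (n : ℕ) (μ : Measure (Fin d → ℝ)), IsProbabilityMeasure μ → μ Aᶜ = 0 →
      IsProbabilityMeasure ((fun m : Measure (Fin d → ℝ) => m.bind (κ ·))^[n] μ) ∧
      ((fun m : Measure (Fin d → ℝ) => m.bind (κ ·))^[n] μ) Aᶜ = 0 ∧
      ∀ k, ∫ x, F k x ∂((fun m : Measure (Fin d → ℝ) => m.bind (κ ·))^[n] μ)
        = ∫ x, F (k + n) x ∂μ := by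
    intro n
    induction n with
    | zero => exact fun μ h1 h2 => ⟨h1, h2, fun k => rfl⟩
    | succ n ih =>
      intro μ h1 h2
      obtain ⟨g1, g2, g3⟩ := hbind μ h1 h2
      obtain ⟨i1, i2, i3⟩ := ih (μ.bind (κ ·)) g1 g2
      rw [Function.iterate_succ_apply]
      exact ⟨i1, i2, fun k => by rw [i3 k, g3 (k + n)]; rfl⟩
  -- stationarity of the value
  have hπs_compl : πs Aᶜ = 0 := by
    rw [measure_compl hAmeas (measure_ne_top πs A), hπs_supp, measure_univ, tsub_self]
  have hπs_F : ∀ n, ∫ x, F n x ∂πs = ∫ x, F 0 x ∂πs := by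
    intro n
    induction n with
    | zero => rfl
    | succ n ih =>
      obtain ⟨-, -, g3⟩ := hbind πs inferInstance hπs_compl
      have h := g3 n
      rw [hstat] at h
      rw [← h, ih]
  have hπs_Q : ∫ x, F 0 x ∂πs = ∫ a', Q a' ∂πs := by
    refine integral_congr_ae ?_
    filter_upwards [hmemA πs hπs_compl] with x hx
    rw [hF0, Set.indicator_of_mem hx]
  -- final assembly
  intro n _hn a ha
  have hdiracc : (Measure.dirac a) Aᶜ = 0 := by
    rw [Measure.dirac_apply' _ hAmeas.compl]
    simp [ha]
  obtain ⟨j1, j2, j3⟩ := hiter n (Measure.dirac a) inferInstance hdiracc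
  obtain ⟨km, kb, ko⟩ := key n
  have hL : ∫ a', Q a' ∂((fun m : Measure (Fin d → ℝ) => m.bind (κ ·))^[n] (Measure.dirac a))
      = F n a := by
    have e1 : ∫ a', Q a'
          ∂((fun m : Measure (Fin d → ℝ) => m.bind (κ ·))^[n] (Measure.dirac a))
        = ∫ x, F 0 x
          ∂((fun m : Measure (Fin d → ℝ) => m.bind (κ ·))^[n] (Measure.dirac a)) := by
      refine (integral_congr_ae ?_).symm
      filter_upwards [hmemA _ j2] with x hx
      rw [hF0, Set.indicator_of_mem hx]
    rw [e1, j3 0]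
    simp only [Nat.zero_add]
    exact integral_dirac' (F n) a km
  have hV : ∫ x, F n x ∂πs = ∫ a', Q a' ∂πs := by rw [hπs_F n, hπs_Q]
  rw [hL, ← hV]
  have hint : Integrable (F n) πs := (integrable_const Qplus).mono' km.aestronglyMeasurable
      (Filter.Eventually.of_forall fun x => by simpa using kb x)
  have hsub : F n a - ∫ x, F n x ∂πs = ∫ x, (F n a - F n x) ∂πs := by
    rw [integral_sub (integrable_const (F n a)) hint, integral_const, probReal_univ,
      one_smul]
  rw [hsub]
  calc |∫ x, (F n a - F n x) ∂πs| ≤ ∫ x, |F n a - F n x| ∂πs := by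
        simpa [Real.norm_eq_abs] using
          norm_integral_le_integral_norm (μ := πs) (fun x => F n a - F n x)
    _ ≤ ∫ _x, 2 * Qplus * r ^ n ∂πs := by
        refine integral_mono_ae ((integrable_const (F n a)).sub hint).abs (integrable_const _) ?_
        filter_upwards [hmemA πs hπs_compl] with x hx
        exact ko a ha x hx
    _ = 2 * Qplus * r ^ n := by simp
end

section
/- For every n ≥ 0, the function F_n(θ) := ∫_A π^s_θ(a) Q_n(a) da is differentiable at θ₀, and the recursive decomposition F_n'(θ₀) = ∫_A π^s_{θ₀}(a) g_n(a) da + F_{n+1}'(θ₀) holds; i.e., the derivative of the stationary expectation of the frozen n-step value function splits into the gradient term acting only on one transition step plus the derivative of the stationary expectation of the (n+1)-step value function. -/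
open MeasureTheory Filter
open Topology

/-- The frozen n-step value functions of a transition density `q` on `A`:
`Q_0 = Q` and `Q_{n+1}(a) = ∫_A q(a₁|a) Q_n(a₁) da₁`, so that
`Q_n(a) = ∫_A q^{(n)}(a'|a) Q(a') da'` for the n-step transition density `q^{(n)}`. -/
noncomputable def Qiter {d : ℕ} (A : Set (Fin d → ℝ))
    (q : (Fin d → ℝ) → (Fin d → ℝ) → ℝ) (Q : (Fin d → ℝ) → ℝ) :
    ℕ → (Fin d → ℝ) → ℝ
  | 0 => Q
  | n + 1 => fun a => ∫ a' in A, q a a' * Qiter A q Q n a'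

/-- The gradient terms of the steady-state policy gradient series:
`g_n(a) = ∂_θ|_{θ=θ₀} ∫_A p_θ(a'|a) Q_n(a') da'`, where `Q_n` is the frozen
n-step value function of the chain with transition density `p_{θ₀}`. -/
noncomputable def gterm {d : ℕ} (A : Set (Fin d → ℝ))
    (p : ℝ → (Fin d → ℝ) → (Fin d → ℝ) → ℝ) (Q : (Fin d → ℝ) → ℝ)
    (θ₀ : ℝ) (n : ℕ) (a : Fin d → ℝ) : ℝ :=
  deriv (fun θ => ∫ a' in A, p θ a a' * Qiter A (p θ₀) Q n a') θ₀

set_option maxHeartbeats 1600000 in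
/-- For every `n ≥ 0` the function
`F_n(θ) = ∫_A π^s_θ(a) Q_n(a) da` is differentiable at `θ₀`, and the recursive
decomposition `F_n'(θ₀) = ∫_A π^s_{θ₀}(a) g_n(a) da + F_{n+1}'(θ₀)` holds. -/
theorem stationary_expectation_recursive_decomposition
    (d : ℕ) (hd : 1 ≤ d)
    (A : Set (Fin d → ℝ)) (hA_compact : IsCompact A) (hA_pos : 0 < volume A)
    (I : Set ℝ) (hI_open : IsOpen I) (hI_conn : I.OrdConnected)
    (p dp : ℝ → (Fin d → ℝ) → (Fin d → ℝ) → ℝ)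
    (hp_cont : ContinuousOn
      (fun x : ℝ × ((Fin d → ℝ) × (Fin d → ℝ)) => p x.1 x.2.1 x.2.2) (I ×ˢ A ×ˢ A))
    (hdp_cont : ContinuousOn
      (fun x : ℝ × ((Fin d → ℝ) × (Fin d → ℝ)) => dp x.1 x.2.1 x.2.2) (I ×ˢ A ×ˢ A))
    (Cp : ℝ)
    (hp_bdd : ∀ θ ∈ I, ∀ a ∈ A, ∀ a' ∈ A, |p θ a a'| ≤ Cp ∧ |dp θ a a'| ≤ Cp)
    (hp_deriv : ∀ θ ∈ I, ∀ a ∈ A, ∀ a' ∈ A, HasDerivAt (fun t => p t a a') (dp θ a a') θ)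
    (hp_dens : ∀ θ ∈ I, ∀ a ∈ A, ∫ a' in A, p θ a a' = 1)
    (δ : ℝ) (hδ : 0 < δ)
    (hδ_inf : ∀ θ ∈ I, ∀ a ∈ A, ∀ a' ∈ A, δ ≤ p θ a a')
    (πs : ℝ → (Fin d → ℝ) → ℝ)
    (hπs_meas : ∀ θ ∈ I, Measurable (πs θ))
    (hπs_nonneg : ∀ θ ∈ I, ∀ a ∈ A, 0 ≤ πs θ a)
    (hπs_dens : ∀ θ ∈ I, ∫ a in A, πs θ a = 1)
    (hπs_stat : ∀ θ ∈ I, ∀ a' ∈ A, πs θ a' = ∫ a in A, πs θ a * p θ a a')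
    (dπs : ℝ → (Fin d → ℝ) → ℝ) (Cπ : ℝ)
    (hπs_deriv : ∀ θ ∈ I, ∀ a ∈ A, HasDerivAt (fun t => πs t a) (dπs θ a) θ)
    (hdπs_bdd : ∀ θ ∈ I, ∀ a ∈ A, |dπs θ a| ≤ Cπ)
    (Q : (Fin d → ℝ) → ℝ) (hQ_cont : ContinuousOn Q A)
    (Qplus : ℝ) (hQ_bdd : ∀ a ∈ A, |Q a| ≤ Qplus)
    (θ₀ : ℝ) (hθ₀ : θ₀ ∈ I) :
    ∀ n : ℕ,
      DifferentiableAt ℝ (fun θ => ∫ a in A, πs θ a * Qiter A (p θ₀) Q n a) θ₀ ∧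
      deriv (fun θ => ∫ a in A, πs θ a * Qiter A (p θ₀) Q n a) θ₀
        = (∫ a in A, πs θ₀ a * gterm A p Q θ₀ n a)
          + deriv (fun θ => ∫ a in A, πs θ a * Qiter A (p θ₀) Q (n + 1) a) θ₀ := by
  intro n
  classical
  -- basic facts about A
  have hA_meas : MeasurableSet A := hA_compact.isClosed.measurableSet
  have hA_fin : volume A < ⊤ := hA_compact.measure_lt_top
  haveI hfinA : IsFiniteMeasure (volume.restrict A) :=
    ⟨by rwa [Measure.restrict_apply_univ]⟩
  obtain ⟨a₀, ha₀⟩ : A.Nonempty := by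
    rcases Set.eq_empty_or_nonempty A with h | h
    · rw [h] at hA_pos; simp at hA_pos
    · exact h
  have hCp0 : 0 ≤ Cp := le_trans (abs_nonneg _) (hp_bdd θ₀ hθ₀ a₀ ha₀ a₀ ha₀).1
  have hCπ0 : 0 ≤ Cπ := le_trans (abs_nonneg _) (hdπs_bdd θ₀ hθ₀ a₀ ha₀)
  set V : ℝ := (volume A).toReal with hV_def
  have hV0 : 0 ≤ V := ENNReal.toReal_nonneg
  -- abs product helper
  have habs : ∀ (x y C B : ℝ), 0 ≤ C → |x| ≤ C → |y| ≤ B → |x * y| ≤ C * B := by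
    intro x y C B hC hx hy
    rw [abs_mul]
    exact mul_le_mul hx hy (abs_nonneg _) hC
  -- integrability of bounded a.e.-strongly measurable functions on A
  have hInt : ∀ (f : (Fin d → ℝ) → ℝ) (C : ℝ),
      AEStronglyMeasurable f (volume.restrict A) → (∀ a ∈ A, |f a| ≤ C) →
      Integrable f (volume.restrict A) := by
    intro f C hm hb
    refine ⟨hm, HasFiniteIntegral.of_bounded (C := C) ?_⟩
    exact ae_restrict_of_forall_mem hA_meas fun a ha => by
      simpa [Real.norm_eq_abs] using hb a ha
  -- continuity of two-variable slices of kernels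
  have hker : ∀ (k : ℝ → (Fin d → ℝ) → (Fin d → ℝ) → ℝ),
      ContinuousOn (fun x : ℝ × ((Fin d → ℝ) × (Fin d → ℝ)) => k x.1 x.2.1 x.2.2)
        (I ×ˢ A ×ˢ A) →
      ∀ θ ∈ I, ContinuousOn (fun x : (Fin d → ℝ) × (Fin d → ℝ) => k θ x.1 x.2) (A ×ˢ A) := by
    intro k hk θ hθ
    exact hk.comp ((Continuous.prodMk_right θ).continuousOn) (fun x hx => ⟨hθ, hx⟩)
  -- continuity in a' of fun a' => k θ a a'
  have hslice : ∀ (k : ℝ → (Fin d → ℝ) → (Fin d → ℝ) → ℝ),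
      ContinuousOn (fun x : ℝ × ((Fin d → ℝ) × (Fin d → ℝ)) => k x.1 x.2.1 x.2.2)
        (I ×ˢ A ×ˢ A) →
      ∀ θ ∈ I, ∀ a ∈ A, ContinuousOn (fun a' => k θ a a') A := by
    intro k hk θ hθ a ha
    exact (hker k hk θ hθ).comp ((Continuous.prodMk_right a).continuousOn)
      (fun a' ha' => ⟨ha, ha'⟩)
  -- continuity in a of fun a => k θ a a'
  have hslice' : ∀ (k : ℝ → (Fin d → ℝ) → (Fin d → ℝ) → ℝ),
      ContinuousOn (fun x : ℝ × ((Fin d → ℝ) × (Fin d → ℝ)) => k x.1 x.2.1 x.2.2)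
        (I ×ˢ A ×ˢ A) →
      ∀ θ ∈ I, ∀ a' ∈ A, ContinuousOn (fun a => k θ a a') A := by
    intro k hk θ hθ a' ha'
    exact (hker k hk θ hθ).comp
      ((continuous_id.prodMk continuous_const).continuousOn) (fun a ha => ⟨ha, ha'⟩)
  -- continuity of parametric integrals over A
  have hContInt : ∀ (k : (Fin d → ℝ) → (Fin d → ℝ) → ℝ),
      ContinuousOn (fun x : (Fin d → ℝ) × (Fin d → ℝ) => k x.1 x.2) (A ×ˢ A) →
      ∀ (C : ℝ), 0 ≤ C → (∀ a ∈ A, ∀ a' ∈ A, |k a a'| ≤ C) →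
      ∀ (φ : (Fin d → ℝ) → ℝ), ContinuousOn φ A → ∀ (B : ℝ), (∀ a ∈ A, |φ a| ≤ B) →
      ContinuousOn (fun a => ∫ a' in A, k a a' * φ a') A := by
    intro k hk C hC hkC φ hφ B hφB a ha
    apply continuousWithinAt_of_dominated (bound := fun _ => C * B)
    · filter_upwards [self_mem_nhdsWithin] with x hx
      exact ((hk.comp ((Continuous.prodMk_right x).continuousOn) (fun a' ha' => ⟨hx, ha'⟩)).mul
        hφ).aestronglyMeasurable hA_meas
    · filter_upwards [self_mem_nhdsWithin] with x hx
      refine ae_restrict_of_forall_mem hA_meas fun a' ha' => ?_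
      rw [Real.norm_eq_abs]
      exact habs _ _ _ _ hC (hkC x hx a' ha') (hφB a' ha')
    · exact integrable_const _
    · refine ae_restrict_of_forall_mem hA_meas fun a' ha' => ?_
      have h1 : ContinuousWithinAt (fun x => k x a') A a :=
        (hk.comp ((continuous_id.prodMk continuous_const).continuousOn)
          (fun x hx => ⟨hx, ha'⟩)) a ha
      exact h1.mul continuousWithinAt_const
  -- bounds and continuity of the iterated value functions
  have hQiter : ∀ m : ℕ, ∃ B : ℝ, 0 ≤ B ∧ (∀ a ∈ A, |Qiter A (p θ₀) Q m a| ≤ B) ∧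
      ContinuousOn (Qiter A (p θ₀) Q m) A := by
    intro m; induction m with
    | zero => exact ⟨Qplus, le_trans (abs_nonneg _) (hQ_bdd a₀ ha₀), hQ_bdd, hQ_cont⟩
    | succ m ih =>
      obtain ⟨B, hB0, hBb, hBc⟩ := ih
      refine ⟨Cp * B * V, by positivity, ?_, ?_⟩
      · intro a ha
        have hb : ‖∫ a' in A, p θ₀ a a' * Qiter A (p θ₀) Q m a'‖ ≤ Cp * B * V := by
          refine norm_setIntegral_le_of_norm_le_const_ae hA_fin ?_
          refine ae_restrict_of_forall_mem hA_meas fun a' ha' => ?_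
          rw [Real.norm_eq_abs]
          exact habs _ _ _ _ hCp0 ((hp_bdd θ₀ hθ₀ a ha a' ha').1) (hBb a' ha')
        simpa [Qiter, Real.norm_eq_abs] using hb
      · have h1 := hContInt (p θ₀) (hker p hp_cont θ₀ hθ₀) Cp hCp0
          (fun a ha a' ha' => (hp_bdd θ₀ hθ₀ a ha a' ha').1)
          (Qiter A (p θ₀) Q m) hBc B hBb
        simpa [Qiter] using h1
  obtain ⟨B, hB0, hQb, hQc⟩ := hQiter n
  obtain ⟨B1, hB10, hQb1, hQc1⟩ := hQiter (n + 1)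
  -- differentiation under the integral sign
  have hDerivInt : ∀ (f df : ℝ → (Fin d → ℝ) → ℝ) (θc r : ℝ), 0 < r →
      Metric.ball θc r ⊆ I →
      (∀ θ ∈ Metric.ball θc r, AEStronglyMeasurable (f θ) (volume.restrict A)) →
      AEStronglyMeasurable (df θc) (volume.restrict A) →
      ∀ C₁ : ℝ, (∀ a ∈ A, |f θc a| ≤ C₁) →
      ∀ C₂ : ℝ, (∀ θ ∈ Metric.ball θc r, ∀ a ∈ A, |df θ a| ≤ C₂) →
      (∀ θ ∈ Metric.ball θc r, ∀ a ∈ A, HasDerivAt (fun t => f t a) (df θ a) θ) →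
      HasDerivAt (fun θ => ∫ a in A, f θ a) (∫ a in A, df θc a) θc := by
    intro f df θc r hr hsub hmeas hdmeas C₁ hC₁ C₂ hC₂ hder
    refine (hasDerivAt_integral_of_dominated_loc_of_deriv_le (bound := fun _ => C₂) (Metric.ball_mem_nhds θc hr)
      ?_ ?_ hdmeas ?_ ?_ ?_).2
    · filter_upwards [Metric.ball_mem_nhds θc hr] with θ hθ using hmeas θ hθ
    · exact hInt _ C₁ (hmeas θc (Metric.mem_ball_self hr)) hC₁
    · refine ae_restrict_of_forall_mem hA_meas fun a ha θ hθ => ?_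
      simpa [Real.norm_eq_abs] using hC₂ θ hθ a ha
    · exact integrable_const _
    · exact ae_restrict_of_forall_mem hA_meas fun a ha θ hθ => hder θ hθ a ha
  -- derivative of the inner integral H(θ, a)
  have hH : ∀ θ ∈ I, ∀ a ∈ A,
      HasDerivAt (fun t => ∫ a' in A, p t a a' * Qiter A (p θ₀) Q n a')
        (∫ a' in A, dp θ a a' * Qiter A (p θ₀) Q n a') θ := by
    intro θ hθ a ha
    obtain ⟨r, hr, hsub⟩ := Metric.isOpen_iff.mp hI_open θ hθ
    refine hDerivInt (fun t a' => p t a a' * Qiter A (p θ₀) Q n a')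
      (fun t a' => dp t a a' * Qiter A (p θ₀) Q n a') θ r hr hsub
      (fun t ht => ((hslice p hp_cont t (hsub ht) a ha).mul hQc).aestronglyMeasurable hA_meas)
      (((hslice dp hdp_cont θ hθ a ha).mul hQc).aestronglyMeasurable hA_meas)
      (Cp * B) (fun a' ha' => habs _ _ _ _ hCp0 ((hp_bdd θ hθ a ha a' ha').1) (hQb a' ha'))
      (Cp * B) (fun t ht a' ha' =>
        habs _ _ _ _ hCp0 ((hp_bdd t (hsub ht) a ha a' ha').2) (hQb a' ha'))
      (fun t ht a' ha' => (hp_deriv t (hsub ht) a ha a' ha').mul_const _)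
  -- continuity of H(θ, ·) and dH(θ₀, ·)
  have hH_cont : ∀ θ ∈ I,
      ContinuousOn (fun a => ∫ a' in A, p θ a a' * Qiter A (p θ₀) Q n a') A := by
    intro θ hθ
    exact hContInt (p θ) (hker p hp_cont θ hθ) Cp hCp0
      (fun a ha a' ha' => (hp_bdd θ hθ a ha a' ha').1) _ hQc B hQb
  have hdH_cont :
      ContinuousOn (fun a => ∫ a' in A, dp θ₀ a a' * Qiter A (p θ₀) Q n a') A :=
    hContInt (dp θ₀) (hker dp hdp_cont θ₀ hθ₀) Cp hCp0
      (fun a ha a' ha' => (hp_bdd θ₀ hθ₀ a ha a' ha').2) _ hQc B hQb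
  -- bounds on H and dH
  have hKbd : ∀ (k : ℝ → (Fin d → ℝ) → (Fin d → ℝ) → ℝ),
      (∀ θ ∈ I, ∀ a ∈ A, ∀ a' ∈ A, |k θ a a'| ≤ Cp) →
      ∀ θ ∈ I, ∀ a ∈ A, |∫ a' in A, k θ a a' * Qiter A (p θ₀) Q n a'| ≤ Cp * B * V := by
    intro k hkb θ hθ a ha
    have hb : ‖∫ a' in A, k θ a a' * Qiter A (p θ₀) Q n a'‖ ≤ Cp * B * V := by
      refine norm_setIntegral_le_of_norm_le_const_ae hA_fin ?_
      refine ae_restrict_of_forall_mem hA_meas fun a' ha' => ?_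
      rw [Real.norm_eq_abs]
      exact habs _ _ _ _ hCp0 (hkb θ hθ a ha a' ha') (hQb a' ha')
    simpa [Real.norm_eq_abs] using hb
  have hHbd := hKbd p (fun θ hθ a ha a' ha' => (hp_bdd θ hθ a ha a' ha').1)
  have hdHbd := hKbd dp (fun θ hθ a ha a' ha' => (hp_bdd θ hθ a ha a' ha').2)
  -- integrability of the stationary density
  have hπs_int : ∀ θ ∈ I, Integrable (πs θ) (volume.restrict A) := by
    intro θ hθ
    by_contra h
    have h0 := hπs_dens θ hθ
    rw [integral_undef h] at h0
    norm_num at h0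
  -- pointwise bound on the stationary density
  have hπs_bd : ∀ θ ∈ I, ∀ a ∈ A, |πs θ a| ≤ Cp := by
    intro θ hθ a' ha'
    rw [abs_of_nonneg (hπs_nonneg θ hθ a' ha'), hπs_stat θ hθ a' ha']
    have hmp : AEStronglyMeasurable (fun a => p θ a a') (volume.restrict A) :=
      (hslice' p hp_cont θ hθ a' ha').aestronglyMeasurable hA_meas
    have h1 : Integrable (fun a => p θ a a' * πs θ a) (volume.restrict A) := by
      refine Integrable.bdd_mul (c := Cp) (hπs_int θ hθ) hmp ?_
      exact ae_restrict_of_forall_mem hA_meas fun a ha => by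
        simpa [Real.norm_eq_abs] using (hp_bdd θ hθ a ha a' ha').1
    have h1' : Integrable (fun a => πs θ a * p θ a a') (volume.restrict A) :=
      h1.congr (Eventually.of_forall fun a => mul_comm _ _)
    have h2 : Integrable (fun a => πs θ a * Cp) (volume.restrict A) :=
      (hπs_int θ hθ).mul_const _
    calc ∫ a in A, πs θ a * p θ a a'
        ≤ ∫ a in A, πs θ a * Cp := by
          refine setIntegral_mono_on h1' h2 hA_meas fun a ha => ?_
          exact mul_le_mul_of_nonneg_left
            (le_trans (le_abs_self _) (hp_bdd θ hθ a ha a' ha').1)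
            (hπs_nonneg θ hθ a ha)
      _ = Cp := by rw [integral_mul_const, hπs_dens θ hθ, one_mul]
  -- a ball around θ₀ inside I
  obtain ⟨ε, hε, hball⟩ := Metric.isOpen_iff.mp hI_open θ₀ hθ₀
  -- a.e.-measurability of dπs θ₀ on A
  have hdπs_meas : AEStronglyMeasurable (dπs θ₀) (volume.restrict A) := by
    set u : ℕ → ℝ := fun k => θ₀ + ε / (2 * ((k : ℝ) + 1)) with hu
    have hpos : ∀ k : ℕ, (0 : ℝ) < ε / (2 * ((k : ℝ) + 1)) := by
      intro k; positivity
    have huI : ∀ k, u k ∈ I := by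
      intro k
      apply hball
      rw [Metric.mem_ball, Real.dist_eq, hu]
      have h1 : (1 : ℝ) < 2 * ((k : ℝ) + 1) := by
        have : (0 : ℝ) ≤ (k : ℝ) := Nat.cast_nonneg k
        nlinarith
      rw [show θ₀ + ε / (2 * ((k : ℝ) + 1)) - θ₀ = ε / (2 * ((k : ℝ) + 1)) by ring,
        abs_of_pos (hpos k)]
      exact div_lt_self hε h1
    have hune : ∀ k, u k ≠ θ₀ := by
      intro k
      have := hpos k
      rw [hu]
      intro hcon
      simp only [add_eq_left] at hcon
      rw [hcon] at this
      exact lt_irrefl _ this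
    have hulim : Tendsto u atTop (𝓝[≠] θ₀) := by
      apply tendsto_nhdsWithin_of_tendsto_nhds_of_eventually_within
      · have h2 : Tendsto (fun k : ℕ => ε / (2 * ((k : ℝ) + 1))) atTop (𝓝 0) := by
          apply Tendsto.div_atTop (tendsto_const_nhds (x := ε))
          have h3 : Tendsto (fun k : ℕ => (k : ℝ) + 1) atTop atTop :=
            tendsto_atTop_add_const_right _ 1 tendsto_natCast_atTop_atTop
          exact h3.const_mul_atTop (by norm_num)
        have h4 : Tendsto u atTop (𝓝 (θ₀ + 0)) := tendsto_const_nhds.add h2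
        simpa using h4
      · exact Eventually.of_forall hune
    have hmeask : ∀ k, AEMeasurable (fun a => (πs (u k) a - πs θ₀ a) / (u k - θ₀))
        (volume.restrict A) := fun k =>
      (((hπs_meas _ (huI k)).sub (hπs_meas θ₀ hθ₀)).div_const _).aemeasurable
    have hlim : AEMeasurable (dπs θ₀) (volume.restrict A) := by
      apply aemeasurable_of_tendsto_metrizable_ae' hmeask
      refine ae_restrict_of_forall_mem hA_meas fun a ha => ?_
      have hd := hπs_deriv θ₀ hθ₀ a ha
      rw [hasDerivAt_iff_tendsto_slope] at hd
      have hcomp := hd.comp hulim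
      simpa [Function.comp_def, slope_def_field] using hcomp
    exact hlim.aestronglyMeasurable
  -- derivative of F_{n+1}
  have hF1 : HasDerivAt (fun θ => ∫ a in A, πs θ a * Qiter A (p θ₀) Q (n + 1) a)
      (∫ a in A, dπs θ₀ a * Qiter A (p θ₀) Q (n + 1) a) θ₀ := by
    refine hDerivInt (fun θ a => πs θ a * Qiter A (p θ₀) Q (n + 1) a)
      (fun θ a => dπs θ a * Qiter A (p θ₀) Q (n + 1) a) θ₀ ε hε hball
      (fun θ hθ => ((hπs_meas θ (hball hθ)).aestronglyMeasurable).mul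
        (hQc1.aestronglyMeasurable hA_meas))
      (hdπs_meas.mul (hQc1.aestronglyMeasurable hA_meas))
      (Cp * B1) (fun a ha => habs _ _ _ _ hCp0 (hπs_bd θ₀ hθ₀ a ha) (hQb1 a ha))
      (Cπ * B1) (fun θ hθ a ha =>
        habs _ _ _ _ hCπ0 (hdπs_bdd θ (hball hθ) a ha) (hQb1 a ha))
      (fun θ hθ a ha => (hπs_deriv θ (hball hθ) a ha).mul_const _)
  -- derivative of G(θ) = ∫ πs θ · H θ
  have hIntX : Integrable
      (fun a => dπs θ₀ a * ∫ a' in A, p θ₀ a a' * Qiter A (p θ₀) Q n a')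
      (volume.restrict A) :=
    hInt _ (Cπ * (Cp * B * V))
      (hdπs_meas.mul ((hH_cont θ₀ hθ₀).aestronglyMeasurable hA_meas))
      (fun a ha => habs _ _ _ _ hCπ0 (hdπs_bdd θ₀ hθ₀ a ha) (hHbd θ₀ hθ₀ a ha))
  have hIntY : Integrable
      (fun a => πs θ₀ a * ∫ a' in A, dp θ₀ a a' * Qiter A (p θ₀) Q n a')
      (volume.restrict A) :=
    hInt _ (Cp * (Cp * B * V))
      (((hπs_meas θ₀ hθ₀).aestronglyMeasurable).mul
        (hdH_cont.aestronglyMeasurable hA_meas))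
      (fun a ha => habs _ _ _ _ hCp0 (hπs_bd θ₀ hθ₀ a ha) (hdHbd θ₀ hθ₀ a ha))
  have hG : HasDerivAt
      (fun θ => ∫ a in A, πs θ a * ∫ a' in A, p θ a a' * Qiter A (p θ₀) Q n a')
      (∫ a in A, (dπs θ₀ a * (∫ a' in A, p θ₀ a a' * Qiter A (p θ₀) Q n a')
        + πs θ₀ a * (∫ a' in A, dp θ₀ a a' * Qiter A (p θ₀) Q n a'))) θ₀ := by
    refine hDerivInt
      (fun θ a => πs θ a * ∫ a' in A, p θ a a' * Qiter A (p θ₀) Q n a')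
      (fun θ a => dπs θ a * (∫ a' in A, p θ a a' * Qiter A (p θ₀) Q n a')
        + πs θ a * (∫ a' in A, dp θ a a' * Qiter A (p θ₀) Q n a')) θ₀ ε hε hball
      (fun θ hθ => ((hπs_meas θ (hball hθ)).aestronglyMeasurable).mul
        ((hH_cont θ (hball hθ)).aestronglyMeasurable hA_meas))
      (hdπs_meas.mul ((hH_cont θ₀ hθ₀).aestronglyMeasurable hA_meas) |>.add
        (((hπs_meas θ₀ hθ₀).aestronglyMeasurable).mul
          (hdH_cont.aestronglyMeasurable hA_meas)))
      (Cp * (Cp * B * V))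
      (fun a ha => habs _ _ _ _ hCp0 (hπs_bd θ₀ hθ₀ a ha) (hHbd θ₀ hθ₀ a ha))
      (Cπ * (Cp * B * V) + Cp * (Cp * B * V))
      (fun θ hθ a ha => by
        refine le_trans (abs_add_le _ _) (add_le_add ?_ ?_)
        · exact habs _ _ _ _ hCπ0 (hdπs_bdd θ (hball hθ) a ha) (hHbd θ (hball hθ) a ha)
        · exact habs _ _ _ _ hCp0 (hπs_bd θ (hball hθ) a ha) (hdHbd θ (hball hθ) a ha))
      (fun θ hθ a ha => (hπs_deriv θ (hball hθ) a ha).mul (hH θ (hball hθ) a ha))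
  -- Fubini identity: G = F_n on I
  have hFG : ∀ θ ∈ I,
      (∫ a in A, πs θ a * ∫ a' in A, p θ a a' * Qiter A (p θ₀) Q n a')
        = ∫ a in A, πs θ a * Qiter A (p θ₀) Q n a := by
    intro θ hθ
    have hint : Integrable
        (Function.uncurry fun a a' => πs θ a * (p θ a a' * Qiter A (p θ₀) Q n a'))
        ((volume.restrict A).prod (volume.restrict A)) := by
      constructor
      · have hm : AEStronglyMeasurable
            (fun z : (Fin d → ℝ) × (Fin d → ℝ) =>
              πs θ z.1 * (p θ z.1 z.2 * Qiter A (p θ₀) Q n z.2))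
            ((volume.prod volume).restrict (A ×ˢ A)) := by
          refine AEStronglyMeasurable.mul ?_ ?_
          · exact ((hπs_meas θ hθ).comp measurable_fst).aestronglyMeasurable
          · exact ((hker p hp_cont θ hθ).mul
              (hQc.comp continuous_snd.continuousOn fun z hz => hz.2)).aestronglyMeasurable
              (hA_meas.prod hA_meas)
        rw [← Measure.prod_restrict] at hm
        exact hm
      · apply HasFiniteIntegral.of_bounded (C := Cp * (Cp * B))
        rw [Measure.prod_restrict]
        refine ae_restrict_of_forall_mem (hA_meas.prod hA_meas) fun z hz => ?_
        obtain ⟨hz1, hz2⟩ := hz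
        simp only [Function.uncurry, Real.norm_eq_abs]
        exact habs _ _ _ _ hCp0 (hπs_bd θ hθ z.1 hz1)
          (habs _ _ _ _ hCp0 ((hp_bdd θ hθ z.1 hz1 z.2 hz2).1) (hQb z.2 hz2))
    calc ∫ a in A, πs θ a * ∫ a' in A, p θ a a' * Qiter A (p θ₀) Q n a'
        = ∫ a in A, ∫ a' in A, πs θ a * (p θ a a' * Qiter A (p θ₀) Q n a') := by
          simp only [integral_const_mul]
      _ = ∫ a' in A, ∫ a in A, πs θ a * (p θ a a' * Qiter A (p θ₀) Q n a') :=
          integral_integral_swap hint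
      _ = ∫ a' in A, πs θ a' * Qiter A (p θ₀) Q n a' := by
          refine setIntegral_congr_fun hA_meas fun a' ha' => ?_
          have h1 : ∫ a in A, πs θ a * (p θ a a' * Qiter A (p θ₀) Q n a')
              = (∫ a in A, πs θ a * p θ a a') * Qiter A (p θ₀) Q n a' := by
            rw [← integral_mul_const]
            exact setIntegral_congr_fun hA_meas fun a _ => (mul_assoc _ _ _).symm
          rw [h1, ← hπs_stat θ hθ a' ha']
  -- F_n agrees with G near θ₀
  have hEq : (fun θ => ∫ a in A, πs θ a * Qiter A (p θ₀) Q n a)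
      =ᶠ[nhds θ₀]
      (fun θ => ∫ a in A, πs θ a * ∫ a' in A, p θ a a' * Qiter A (p θ₀) Q n a') :=
    eventually_of_mem (hI_open.mem_nhds hθ₀) fun θ hθ => (hFG θ hθ).symm
  have hFn : HasDerivAt (fun θ => ∫ a in A, πs θ a * Qiter A (p θ₀) Q n a)
      (∫ a in A, (dπs θ₀ a * (∫ a' in A, p θ₀ a a' * Qiter A (p θ₀) Q n a')
        + πs θ₀ a * (∫ a' in A, dp θ₀ a a' * Qiter A (p θ₀) Q n a'))) θ₀ :=
    hG.congr_of_eventuallyEq hEq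
  refine ⟨hFn.differentiableAt, ?_⟩
  rw [hFn.deriv, hF1.deriv, integral_add hIntX hIntY, add_comm]
  congr 1
  · refine setIntegral_congr_fun hA_meas fun a ha => ?_
    congr 1
    exact ((hH θ₀ hθ₀ a ha).deriv).symm
end

section
/- Let S⁺ := sup{|∂_θ log p_θ(a'|a)|_{θ=θ₀}| : a, a' ∈ A}, which is finite since p ≥ δ > 0 and ∂_θ p is bounded. Then for every n ≥ 0 and every a ∈ A, |g_n(a)| ≤ 2·S⁺·Q⁺·(1 − δ·m(A))^n; i.e., the gradient terms of the steady-state policy gradient series converge to zero exponentially fast. -/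
open MeasureTheory Filter

/-- With `S⁺` a (finite) bound on the score
`|∂_θ log p_θ(a'|a)|_{θ=θ₀}|` over `a, a' ∈ A`, the gradient terms of the steady-state
policy gradient series decay exponentially:
`|g_n(a)| ≤ 2·S⁺·Q⁺·(1 − δ·m(A))^n` for every `n ≥ 0` and `a ∈ A`. -/
theorem gradient_terms_exponential_decay
    (d : ℕ) (hd : 1 ≤ d)
    (A : Set (Fin d → ℝ)) (hA_compact : IsCompact A) (hA_pos : 0 < volume A)
    (I : Set ℝ) (hI_open : IsOpen I) (hI_conn : I.OrdConnected)
    (p dp : ℝ → (Fin d → ℝ) → (Fin d → ℝ) → ℝ)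
    (hp_cont : ContinuousOn
      (fun x : ℝ × ((Fin d → ℝ) × (Fin d → ℝ)) => p x.1 x.2.1 x.2.2) (I ×ˢ A ×ˢ A))
    (hdp_cont : ContinuousOn
      (fun x : ℝ × ((Fin d → ℝ) × (Fin d → ℝ)) => dp x.1 x.2.1 x.2.2) (I ×ˢ A ×ˢ A))
    (Cp : ℝ)
    (hp_bdd : ∀ θ ∈ I, ∀ a ∈ A, ∀ a' ∈ A, |p θ a a'| ≤ Cp ∧ |dp θ a a'| ≤ Cp)
    (hp_deriv : ∀ θ ∈ I, ∀ a ∈ A, ∀ a' ∈ A, HasDerivAt (fun t => p t a a') (dp θ a a') θ)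
    (hp_dens : ∀ θ ∈ I, ∀ a ∈ A, ∫ a' in A, p θ a a' = 1)
    (δ : ℝ) (hδ : 0 < δ)
    (hδ_inf : ∀ θ ∈ I, ∀ a ∈ A, ∀ a' ∈ A, δ ≤ p θ a a')
    (Q : (Fin d → ℝ) → ℝ) (hQ_cont : ContinuousOn Q A)
    (Qplus : ℝ) (hQ_bdd : ∀ a ∈ A, |Q a| ≤ Qplus)
    (θ₀ : ℝ) (hθ₀ : θ₀ ∈ I)
    (Splus : ℝ)
    (hS_bdd : ∀ a ∈ A, ∀ a' ∈ A, |deriv (fun θ => Real.log (p θ a a')) θ₀| ≤ Splus) :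
    ∀ n : ℕ, ∀ a ∈ A,
      |gterm A p Q θ₀ n a| ≤ 2 * Splus * Qplus * (1 - δ * (volume A).toReal) ^ n := by
  classical
  have hAmeas : MeasurableSet A := hA_compact.isClosed.measurableSet
  have hAfin : volume A < ⊤ := hA_compact.measure_lt_top
  obtain ⟨a₀, ha₀⟩ : A.Nonempty := nonempty_of_measure_ne_zero hA_pos.ne'
  set mA : ℝ := (volume A).toReal with hmA
  set QN : ℕ → (Fin d → ℝ) → ℝ := Qiter A (p θ₀) Q with hQN
  have hQplus : 0 ≤ Qplus := (abs_nonneg _).trans (hQ_bdd a₀ ha₀)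
  have hCp : 0 ≤ Cp := (abs_nonneg _).trans (hp_bdd θ₀ hθ₀ a₀ ha₀ a₀ ha₀).1
  have hSplus : 0 ≤ Splus := (abs_nonneg _).trans (hS_bdd a₀ ha₀ a₀ ha₀)
  -- continuity of sections
  have hpc : ∀ θ ∈ I, ∀ a ∈ A, ContinuousOn (fun a' => p θ a a') A := by
    intro θ hθ a ha
    refine hp_cont.comp ((continuous_const.prodMk
      (continuous_const.prodMk continuous_id)).continuousOn) ?_
    exact fun a' ha' => ⟨hθ, ha, ha'⟩
  have hdpc : ∀ θ ∈ I, ∀ a ∈ A, ContinuousOn (fun a' => dp θ a a') A := by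
    intro θ hθ a ha
    refine hdp_cont.comp ((continuous_const.prodMk
      (continuous_const.prodMk continuous_id)).continuousOn) ?_
    exact fun a' ha' => ⟨hθ, ha, ha'⟩
  have hpc2 : ∀ a' ∈ A, ContinuousOn (fun a => p θ₀ a a') A := by
    intro a' ha'
    refine hp_cont.comp ((continuous_const.prodMk
      (continuous_id.prodMk continuous_const)).continuousOn) ?_
    exact fun a ha => ⟨hθ₀, ha, ha'⟩
  -- Q_n is continuous on A and bounded by Qplus
  have hQn : ∀ n, ContinuousOn (QN n) A ∧ ∀ a ∈ A, |QN n a| ≤ Qplus := by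
    intro n
    induction n with
    | zero => exact ⟨hQ_cont, hQ_bdd⟩
    | succ n ih =>
      have hintQ : ∀ a ∈ A, IntegrableOn (fun a' => p θ₀ a a' * QN n a') A :=
        fun a ha => ((hpc θ₀ hθ₀ a ha).mul ih.1).integrableOn_compact hA_compact
      constructor
      · show ContinuousOn (fun a => ∫ a' in A, p θ₀ a a' * QN n a') A
        refine continuousOn_of_dominated
          (bound := fun _ => Cp * Qplus)
          (fun a ha => ((hpc θ₀ hθ₀ a ha).mul ih.1).aestronglyMeasurable hAmeas) ?_ ?_ ?_
        · intro a ha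
          filter_upwards [ae_restrict_mem hAmeas] with a' ha'
          rw [Real.norm_eq_abs, abs_mul]
          exact mul_le_mul (hp_bdd θ₀ hθ₀ a ha a' ha').1 (ih.2 a' ha') (abs_nonneg _) hCp
        · exact integrableOn_const hAfin.ne
        · filter_upwards [ae_restrict_mem hAmeas] with a' ha'
          exact (hpc2 a' ha').mul continuousOn_const
      · intro a ha
        show |∫ a' in A, p θ₀ a a' * QN n a'| ≤ Qplus
        calc |∫ a' in A, p θ₀ a a' * QN n a'| ≤ ∫ a' in A, |p θ₀ a a' * QN n a'| := by
              simpa [Real.norm_eq_abs, abs_mul] using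
                norm_integral_le_integral_norm (μ := volume.restrict A)
                  (fun a' => p θ₀ a a' * QN n a')
          _ ≤ ∫ a' in A, Qplus * p θ₀ a a' := by
              refine setIntegral_mono_on ((hintQ a ha).abs)
                (((hpc θ₀ hθ₀ a ha).const_smul Qplus).integrableOn_compact hA_compact)
                hAmeas ?_
              intro a' ha'
              rw [abs_mul, mul_comm]
              have hppos : 0 ≤ p θ₀ a a' := hδ.le.trans (hδ_inf θ₀ hθ₀ a ha a' ha')
              rw [abs_of_nonneg hppos]
              exact mul_le_mul_of_nonneg_right (ih.2 a' ha') hppos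
          _ = Qplus := by rw [integral_const_mul, hp_dens θ₀ hθ₀ a ha, mul_one]
  -- δ * mA ≤ 1
  have hδm : δ * mA ≤ 1 := by
    have h1 : ∫ a' in A, δ ≤ ∫ a' in A, p θ₀ a₀ a' :=
      setIntegral_mono_on (integrableOn_const hAfin.ne)
        ((hpc θ₀ hθ₀ a₀ ha₀).integrableOn_compact hA_compact) hAmeas
        (fun a' ha' => hδ_inf θ₀ hθ₀ a₀ ha₀ a' ha')
    rw [setIntegral_const, hp_dens θ₀ hθ₀ a₀ ha₀, smul_eq_mul, mul_comm] at h1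
    exact h1
  have hlam0 : 0 ≤ 1 - δ * mA := by linarith
  -- integral of (p - δ) over A
  have hpδint : ∀ a ∈ A, ∫ a' in A, (p θ₀ a a' - δ) = 1 - δ * mA := by
    intro a ha
    rw [integral_sub ((hpc θ₀ hθ₀ a ha).integrableOn_compact hA_compact)
      (integrableOn_const hAfin.ne), hp_dens θ₀ hθ₀ a ha, setIntegral_const,
      smul_eq_mul, mul_comm, measureReal_def, ← hmA]
  -- oscillation bound
  have hosc : ∀ n, ∃ ml Mu : ℝ, (∀ a ∈ A, ml ≤ QN n a ∧ QN n a ≤ Mu) ∧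
      Mu - ml ≤ 2 * Qplus * (1 - δ * mA) ^ n := by
    intro n
    induction n with
    | zero =>
      refine ⟨-Qplus, Qplus, fun a ha => ?_, by rw [pow_zero]; linarith⟩
      have := abs_le.1 (hQ_bdd a ha); exact ⟨this.1, this.2⟩
    | succ n ih =>
      obtain ⟨ml, Mu, hb, hd2⟩ := ih
      set c : ℝ := ∫ a' in A, QN n a' with hc
      have hQnint : IntegrableOn (QN n) A := (hQn n).1.integrableOn_compact hA_compact
      have hsplit : ∀ a ∈ A, QN (n + 1) a = (∫ a' in A, (p θ₀ a a' - δ) * QN n a') + δ * c := by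
        intro a ha
        show (∫ a' in A, p θ₀ a a' * QN n a') = _
        have h1 : ∀ a' ∈ A, p θ₀ a a' * QN n a' = (p θ₀ a a' - δ) * QN n a' + δ * QN n a' := by
          intro a' _; ring
        rw [setIntegral_congr_fun hAmeas h1, integral_add (μ := volume.restrict A)
          (f := fun a' => (p θ₀ a a' - δ) * QN n a') (g := fun a' => δ * QN n a')
          (show IntegrableOn (fun a' => (p θ₀ a a' - δ) * QN n a') A volume from
          ((((hpc θ₀ hθ₀ a ha).sub continuousOn_const).mul (hQn n).1).integrableOn_compact
            hA_compact)) (hQnint.const_mul δ), integral_const_mul]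
      have hintpd : ∀ a ∈ A, IntegrableOn (fun a' => (p θ₀ a a' - δ) * QN n a') A :=
        fun a ha => (((hpc θ₀ hθ₀ a ha).sub continuousOn_const).mul
          (hQn n).1).integrableOn_compact hA_compact
      have hintpdc : ∀ a ∈ A, ∀ r : ℝ, IntegrableOn (fun a' => (p θ₀ a a' - δ) * r) A :=
        fun a ha r => (((hpc θ₀ hθ₀ a ha).sub continuousOn_const).mul
          continuousOn_const).integrableOn_compact hA_compact
      have hpdnn : ∀ a ∈ A, ∀ a' ∈ A, 0 ≤ p θ₀ a a' - δ :=
        fun a ha a' ha' => sub_nonneg.2 (hδ_inf θ₀ hθ₀ a ha a' ha')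
      refine ⟨δ * c + (1 - δ * mA) * ml, δ * c + (1 - δ * mA) * Mu, fun a ha => ?_, ?_⟩
      · constructor
        · rw [hsplit a ha]
          have : ∫ a' in A, (p θ₀ a a' - δ) * ml ≤ ∫ a' in A, (p θ₀ a a' - δ) * QN n a' :=
            setIntegral_mono_on (hintpdc a ha ml) (hintpd a ha) hAmeas
              (fun a' ha' => mul_le_mul_of_nonneg_left (hb a' ha').1 (hpdnn a ha a' ha'))
          rw [integral_mul_const, hpδint a ha] at this
          linarith [this]
        · rw [hsplit a ha]
          have : ∫ a' in A, (p θ₀ a a' - δ) * QN n a' ≤ ∫ a' in A, (p θ₀ a a' - δ) * Mu :=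
            setIntegral_mono_on (hintpd a ha) (hintpdc a ha Mu) hAmeas
              (fun a' ha' => mul_le_mul_of_nonneg_left (hb a' ha').2 (hpdnn a ha a' ha'))
          rw [integral_mul_const, hpδint a ha] at this
          linarith [this]
      · have : δ * c + (1 - δ * mA) * Mu - (δ * c + (1 - δ * mA) * ml)
            = (1 - δ * mA) * (Mu - ml) := by ring
        rw [this, pow_succ]
        calc (1 - δ * mA) * (Mu - ml) ≤ (1 - δ * mA) * (2 * Qplus * (1 - δ * mA) ^ n) :=
              mul_le_mul_of_nonneg_left hd2 hlam0
          _ = 2 * Qplus * ((1 - δ * mA) ^ n * (1 - δ * mA)) := by ring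
  -- differentiation under the integral sign
  obtain ⟨ε, εpos, hball⟩ := Metric.isOpen_iff.1 hI_open θ₀ hθ₀
  have hderivQ : ∀ n, ∀ a ∈ A,
      HasDerivAt (fun θ => ∫ a' in A, p θ a a' * QN n a')
        (∫ a' in A, dp θ₀ a a' * QN n a') θ₀ := by
    intro n a ha
    have key := hasDerivAt_integral_of_dominated_loc_of_deriv_le (μ := volume.restrict A) (x₀ := θ₀)
      (F := fun θ a' => p θ a a' * QN n a') (F' := fun θ a' => dp θ a a' * QN n a')
      (bound := fun _ => Cp * Qplus) (Metric.ball_mem_nhds θ₀ εpos)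
      ?_ ?_ ?_ ?_ ?_ ?_
    · exact key.2
    · filter_upwards [hI_open.mem_nhds hθ₀] with θ hθ
      exact ((hpc θ hθ a ha).mul (hQn n).1).aestronglyMeasurable hAmeas
    · exact ((hpc θ₀ hθ₀ a ha).mul (hQn n).1).integrableOn_compact hA_compact
    · exact ((hdpc θ₀ hθ₀ a ha).mul (hQn n).1).aestronglyMeasurable hAmeas
    · filter_upwards [ae_restrict_mem hAmeas] with a' ha'
      intro θ hθ
      rw [Real.norm_eq_abs, abs_mul]
      exact mul_le_mul (hp_bdd θ (hball hθ) a ha a' ha').2 ((hQn n).2 a' ha')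
        (abs_nonneg _) hCp
    · exact integrableOn_const hAfin.ne
    · filter_upwards [ae_restrict_mem hAmeas] with a' ha'
      intro θ hθ
      exact (hp_deriv θ (hball hθ) a ha a' ha').mul_const _
  -- integral of dp over A vanishes
  have hdp0 : ∀ a ∈ A, (∫ a' in A, dp θ₀ a a') = 0 := by
    intro a ha
    have key := hasDerivAt_integral_of_dominated_loc_of_deriv_le (μ := volume.restrict A) (x₀ := θ₀)
      (F := fun θ a' => p θ a a') (F' := fun θ a' => dp θ a a')
      (bound := fun _ => Cp) (Metric.ball_mem_nhds θ₀ εpos)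
      ?_ ?_ ?_ ?_ ?_ ?_
    · have h1 : HasDerivAt (fun θ => ∫ a' in A, p θ a a') (∫ a' in A, dp θ₀ a a') θ₀ := key.2
      have h2 : (fun θ => ∫ a' in A, p θ a a') =ᶠ[nhds θ₀] fun _ => (1 : ℝ) := by
        filter_upwards [hI_open.mem_nhds hθ₀] with θ hθ using hp_dens θ hθ a ha
      have h3 : HasDerivAt (fun θ => ∫ a' in A, p θ a a') 0 θ₀ :=
        (hasDerivAt_const θ₀ (1 : ℝ)).congr_of_eventuallyEq h2
      exact h1.unique h3
    · filter_upwards [hI_open.mem_nhds hθ₀] with θ hθ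
      exact (hpc θ hθ a ha).aestronglyMeasurable hAmeas
    · exact (hpc θ₀ hθ₀ a ha).integrableOn_compact hA_compact
    · exact (hdpc θ₀ hθ₀ a ha).aestronglyMeasurable hAmeas
    · filter_upwards [ae_restrict_mem hAmeas] with a' ha'
      intro θ hθ
      exact (hp_bdd θ (hball hθ) a ha a' ha').2
    · exact integrableOn_const hAfin.ne
    · filter_upwards [ae_restrict_mem hAmeas] with a' ha'
      intro θ hθ
      exact hp_deriv θ (hball hθ) a ha a' ha'
  -- score bound
  have hscore : ∀ a ∈ A, ∀ a' ∈ A, |dp θ₀ a a'| ≤ Splus * p θ₀ a a' := by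
    intro a ha a' ha'
    have hppos : 0 < p θ₀ a a' := hδ.trans_le (hδ_inf θ₀ hθ₀ a ha a' ha')
    have hlog : HasDerivAt (fun θ => Real.log (p θ a a'))
        (dp θ₀ a a' / p θ₀ a a') θ₀ := (hp_deriv θ₀ hθ₀ a ha a' ha').log hppos.ne'
    have := hS_bdd a ha a' ha'
    rw [hlog.deriv, abs_div, abs_of_pos hppos, div_le_iff₀ hppos] at this
    exact this
  -- main estimate
  intro n a ha
  obtain ⟨ml, Mu, hb, hd2⟩ := hosc n
  have hgt : gterm A p Q θ₀ n a = ∫ a' in A, dp θ₀ a a' * QN n a' :=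
    (hderivQ n a ha).deriv
  have hintdQ : IntegrableOn (fun a' => dp θ₀ a a' * QN n a') A :=
    ((hdpc θ₀ hθ₀ a ha).mul (hQn n).1).integrableOn_compact hA_compact
  have hintd : IntegrableOn (fun a' => dp θ₀ a a' * QN n a) A :=
    ((hdpc θ₀ hθ₀ a ha).mul continuousOn_const).integrableOn_compact hA_compact
  have hshift : (∫ a' in A, dp θ₀ a a' * QN n a')
      = ∫ a' in A, dp θ₀ a a' * (QN n a' - QN n a) := by
    have h1 : ∀ a' ∈ A, dp θ₀ a a' * (QN n a' - QN n a)
        = dp θ₀ a a' * QN n a' - dp θ₀ a a' * QN n a := fun a' _ => by ring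
    rw [setIntegral_congr_fun hAmeas h1, integral_sub hintdQ hintd, integral_mul_const,
      hdp0 a ha, zero_mul, sub_zero]
  rw [hgt, hshift]
  have hbound : ∀ a' ∈ A, |dp θ₀ a a' * (QN n a' - QN n a)|
      ≤ (Splus * (2 * Qplus * (1 - δ * mA) ^ n)) * p θ₀ a a' := by
    intro a' ha'
    rw [abs_mul]
    have h1 : |QN n a' - QN n a| ≤ 2 * Qplus * (1 - δ * mA) ^ n := by
      have hb1 := hb a' ha'; have hb2 := hb a ha
      rw [abs_le]; constructor <;> [linarith; linarith]
    have hppos : 0 ≤ p θ₀ a a' := hδ.le.trans (hδ_inf θ₀ hθ₀ a ha a' ha')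
    calc |dp θ₀ a a'| * |QN n a' - QN n a|
        ≤ (Splus * p θ₀ a a') * (2 * Qplus * (1 - δ * mA) ^ n) :=
          mul_le_mul (hscore a ha a' ha') h1 (abs_nonneg _)
            (mul_nonneg hSplus hppos)
      _ = (Splus * (2 * Qplus * (1 - δ * mA) ^ n)) * p θ₀ a a' := by ring
  calc |∫ a' in A, dp θ₀ a a' * (QN n a' - QN n a)|
      ≤ ∫ a' in A, |dp θ₀ a a' * (QN n a' - QN n a)| := by
        simpa [Real.norm_eq_abs, abs_mul] using
          norm_integral_le_integral_norm (μ := volume.restrict A)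
            (fun a' => dp θ₀ a a' * (QN n a' - QN n a))
    _ ≤ ∫ a' in A, (Splus * (2 * Qplus * (1 - δ * mA) ^ n)) * p θ₀ a a' := by
        refine setIntegral_mono_on ?_ ?_ hAmeas hbound
        · exact (((hdpc θ₀ hθ₀ a ha).mul ((hQn n).1.sub continuousOn_const)).abs).integrableOn_compact
            hA_compact
        · exact (continuousOn_const.mul (hpc θ₀ hθ₀ a ha)).integrableOn_compact hA_compact
    _ = Splus * (2 * Qplus * (1 - δ * mA) ^ n) := by
        rw [integral_const_mul, hp_dens θ₀ hθ₀ a ha, mul_one]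
    _ = 2 * Splus * Qplus * (1 - δ * mA) ^ n := by ring
end

section
/- Let ε := δ·m(A) ∈ (0, 1] and S⁺ := sup{|∂_θ log p_θ(a'|a)|_{θ=θ₀}| : a, a' ∈ A}. Then for every N ≥ 0 and every a ∈ A the tail of the steady-state policy gradient series satisfies |∑_{n=N+1}^∞ g_n(a)| ≤ 2·S⁺·Q⁺·(1 − ε)^{N+1}/ε; consequently the true policy gradient ∫_A π^s_{θ₀}(a)(∑_{n=0}^∞ g_n(a)) da differs from its finite truncation ∫_A π^s_{θ₀}(a)(∑_{n=0}^N g_n(a)) da by at most 2·S⁺·Q⁺·(1 − ε)^{N+1}/ε, so the policy gradient can be estimated with arbitrarily small error using finitely many terms. -/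
open MeasureTheory Filter

/-- With `ε = δ·m(A) ∈ (0,1]` and `S⁺` a bound on the score
`|∂_θ log p_θ(a'|a)|_{θ=θ₀}|`, for every `N ≥ 0` and `a ∈ A` the tail of the
steady-state policy gradient series satisfies
`|∑_{n=N+1}^∞ g_n(a)| ≤ 2·S⁺·Q⁺·(1−ε)^{N+1}/ε`; consequently the true policy gradient
`∫_A π^s_{θ₀}(∑_{n=0}^∞ g_n)` differs from the finite truncation
`∫_A π^s_{θ₀}(∑_{n=0}^N g_n)` by at most `2·S⁺·Q⁺·(1−ε)^{N+1}/ε`. -/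
theorem policy_gradient_truncation_error
    (d : ℕ) (hd : 1 ≤ d)
    (A : Set (Fin d → ℝ)) (hA_compact : IsCompact A) (hA_pos : 0 < volume A)
    (I : Set ℝ) (hI_open : IsOpen I) (hI_conn : I.OrdConnected)
    (p dp : ℝ → (Fin d → ℝ) → (Fin d → ℝ) → ℝ)
    (hp_cont : ContinuousOn
      (fun x : ℝ × ((Fin d → ℝ) × (Fin d → ℝ)) => p x.1 x.2.1 x.2.2) (I ×ˢ A ×ˢ A))
    (hdp_cont : ContinuousOn
      (fun x : ℝ × ((Fin d → ℝ) × (Fin d → ℝ)) => dp x.1 x.2.1 x.2.2) (I ×ˢ A ×ˢ A))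
    (Cp : ℝ)
    (hp_bdd : ∀ θ ∈ I, ∀ a ∈ A, ∀ a' ∈ A, |p θ a a'| ≤ Cp ∧ |dp θ a a'| ≤ Cp)
    (hp_deriv : ∀ θ ∈ I, ∀ a ∈ A, ∀ a' ∈ A, HasDerivAt (fun t => p t a a') (dp θ a a') θ)
    (hp_dens : ∀ θ ∈ I, ∀ a ∈ A, ∫ a' in A, p θ a a' = 1)
    (δ : ℝ) (hδ : 0 < δ)
    (hδ_inf : ∀ θ ∈ I, ∀ a ∈ A, ∀ a' ∈ A, δ ≤ p θ a a')
    (πs : ℝ → (Fin d → ℝ) → ℝ)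
    (hπs_meas : ∀ θ ∈ I, Measurable (πs θ))
    (hπs_nonneg : ∀ θ ∈ I, ∀ a ∈ A, 0 ≤ πs θ a)
    (hπs_dens : ∀ θ ∈ I, ∫ a in A, πs θ a = 1)
    (hπs_stat : ∀ θ ∈ I, ∀ a' ∈ A, πs θ a' = ∫ a in A, πs θ a * p θ a a')
    (Q : (Fin d → ℝ) → ℝ) (hQ_cont : ContinuousOn Q A)
    (Qplus : ℝ) (hQ_bdd : ∀ a ∈ A, |Q a| ≤ Qplus)
    (θ₀ : ℝ) (hθ₀ : θ₀ ∈ I)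
    (Splus : ℝ)
    (hS_bdd : ∀ a ∈ A, ∀ a' ∈ A, |deriv (fun θ => Real.log (p θ a a')) θ₀| ≤ Splus) :
    0 < δ * (volume A).toReal ∧ δ * (volume A).toReal ≤ 1 ∧
    ∀ N : ℕ,
      (∀ a ∈ A,
        |∑' n : ℕ, gterm A p Q θ₀ (N + 1 + n) a|
          ≤ 2 * Splus * Qplus * (1 - δ * (volume A).toReal) ^ (N + 1)
              / (δ * (volume A).toReal)) ∧
      |(∫ a in A, πs θ₀ a * ∑' n : ℕ, gterm A p Q θ₀ n a)
          - ∫ a in A, πs θ₀ a * ∑ n ∈ Finset.range (N + 1), gterm A p Q θ₀ n a|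
        ≤ 2 * Splus * Qplus * (1 - δ * (volume A).toReal) ^ (N + 1)
            / (δ * (volume A).toReal) := by
  classical
  have hA_meas : MeasurableSet A := hA_compact.isClosed.measurableSet
  have hA_fin : volume A ≠ ⊤ := hA_compact.measure_lt_top.ne
  set mA : ℝ := (volume A).toReal with hmA_def
  have hmA : 0 < mA := ENNReal.toReal_pos hA_pos.ne' hA_fin
  set ε : ℝ := δ * mA with hε_def
  have hε_pos : 0 < ε := mul_pos hδ hmA
  have hA_ne : A.Nonempty := by
    rcases A.eq_empty_or_nonempty with h | h
    · exfalso; rw [h] at hA_pos; simp at hA_pos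
    · exact h
  obtain ⟨a₀, ha₀⟩ := hA_ne
  have hQplus : 0 ≤ Qplus := (abs_nonneg _).trans (hQ_bdd a₀ ha₀)
  have hSplus : 0 ≤ Splus := (abs_nonneg _).trans (hS_bdd a₀ ha₀ a₀ ha₀)
  have hCp : 0 ≤ Cp := (abs_nonneg _).trans (hp_bdd θ₀ hθ₀ a₀ ha₀ a₀ ha₀).1
  -- slices of continuity
  have hsliceP : ∀ θ ∈ I, ∀ a ∈ A, ContinuousOn (fun a' => p θ a a') A := by
    intro θ hθ a ha
    have hmap : Set.MapsTo (fun a' : Fin d → ℝ => (θ, (a, a'))) A (I ×ˢ A ×ˢ A) :=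
      fun a' ha' => Set.mem_prod.2 ⟨hθ, Set.mem_prod.2 ⟨ha, ha'⟩⟩
    exact hp_cont.comp (Continuous.continuousOn (by fun_prop)) hmap
  have hsliceD : ∀ θ ∈ I, ∀ a ∈ A, ContinuousOn (fun a' => dp θ a a') A := by
    intro θ hθ a ha
    have hmap : Set.MapsTo (fun a' : Fin d → ℝ => (θ, (a, a'))) A (I ×ˢ A ×ˢ A) :=
      fun a' ha' => Set.mem_prod.2 ⟨hθ, Set.mem_prod.2 ⟨ha, ha'⟩⟩
    exact hdp_cont.comp (Continuous.continuousOn (by fun_prop)) hmap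
  have hsliceP' : ∀ θ ∈ I, ∀ a' ∈ A, ContinuousOn (fun a => p θ a a') A := by
    intro θ hθ a' ha'
    have hmap : Set.MapsTo (fun a : Fin d → ℝ => (θ, (a, a'))) A (I ×ˢ A ×ˢ A) :=
      fun a ha => Set.mem_prod.2 ⟨hθ, Set.mem_prod.2 ⟨ha, ha'⟩⟩
    exact hp_cont.comp (Continuous.continuousOn (by fun_prop)) hmap
  have hsliceD' : ∀ θ ∈ I, ∀ a' ∈ A, ContinuousOn (fun a => dp θ a a') A := by
    intro θ hθ a' ha'
    have hmap : Set.MapsTo (fun a : Fin d → ℝ => (θ, (a, a'))) A (I ×ˢ A ×ˢ A) :=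
      fun a ha => Set.mem_prod.2 ⟨hθ, Set.mem_prod.2 ⟨ha, ha'⟩⟩
    exact hdp_cont.comp (Continuous.continuousOn (by fun_prop)) hmap
  have haeA : ∀ᵐ a ∂(volume.restrict A), a ∈ A := ae_restrict_mem hA_meas
  -- ε ≤ 1
  have hε1 : ε ≤ 1 := by
    have hδint : IntegrableOn (fun _ : Fin d → ℝ => δ) A volume :=
      integrableOn_const hA_fin
    have hpint : IntegrableOn (fun a' => p θ₀ a₀ a') A volume :=
      (hsliceP θ₀ hθ₀ a₀ ha₀).integrableOn_compact hA_compact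
    have h := setIntegral_mono_on hδint hpint hA_meas
      (fun a' ha' => hδ_inf θ₀ hθ₀ a₀ ha₀ a' ha')
    rw [hp_dens θ₀ hθ₀ a₀ ha₀, setIntegral_const, smul_eq_mul] at h
    rw [show volume.real A = mA from rfl] at h; rw [hε_def]; linarith [h]
  have h1ε0 : 0 ≤ 1 - ε := by linarith
  have h1ε1 : 1 - ε < 1 := by linarith
  -- abbreviation
  set Qi : ℕ → (Fin d → ℝ) → ℝ := Qiter A (p θ₀) Q with hQi_def
  -- Qiter continuity and bound
  have hQiter : ∀ n, ContinuousOn (Qi n) A ∧ ∀ a ∈ A, |Qi n a| ≤ Qplus := by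
    intro n; induction n with
    | zero => exact ⟨hQ_cont, hQ_bdd⟩
    | succ n ih =>
      obtain ⟨ihc, ihb⟩ := ih
      have hQsucc : ∀ a, Qi (n + 1) a = ∫ a' in A, p θ₀ a a' * Qi n a' := fun a => rfl
      constructor
      · have : ContinuousOn (fun a => ∫ a' in A, p θ₀ a a' * Qi n a') A := by
          apply continuousOn_of_dominated
            (bound := fun _ => Cp * Qplus)
          · intro a ha
            exact ((hsliceP θ₀ hθ₀ a ha).mul ihc).aestronglyMeasurable hA_meas
          · intro a ha
            filter_upwards [haeA] with a' ha'
            rw [Real.norm_eq_abs, abs_mul]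
            exact mul_le_mul (hp_bdd θ₀ hθ₀ a ha a' ha').1 (ihb a' ha') (abs_nonneg _) hCp
          · exact integrableOn_const hA_fin
          · filter_upwards [haeA] with a' ha'
            exact (hsliceP' θ₀ hθ₀ a' ha').mul continuousOn_const
        intro a ha; exact this a ha
      · intro a ha
        rw [hQsucc]
        have h1 : |∫ a' in A, p θ₀ a a' * Qi n a'| ≤ ∫ a' in A, |p θ₀ a a' * Qi n a'| :=
          by
          simpa only [Real.norm_eq_abs] using norm_integral_le_integral_norm (μ := volume.restrict A) (fun a' => p θ₀ a a' * Qi n a')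
        have hint1 : IntegrableOn (fun a' => |p θ₀ a a' * Qi n a'|) A volume :=
          (((hsliceP θ₀ hθ₀ a ha).mul ihc).abs).integrableOn_compact hA_compact
        have hint2 : IntegrableOn (fun a' => p θ₀ a a' * Qplus) A volume :=
          ((hsliceP θ₀ hθ₀ a ha).mul continuousOn_const).integrableOn_compact hA_compact
        have h2 : ∫ a' in A, |p θ₀ a a' * Qi n a'| ≤ ∫ a' in A, p θ₀ a a' * Qplus := by
          apply setIntegral_mono_on hint1 hint2 hA_meas
          intro a' ha'
          rw [abs_mul, abs_of_pos (lt_of_lt_of_le hδ (hδ_inf θ₀ hθ₀ a ha a' ha'))]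
          exact mul_le_mul_of_nonneg_left (ihb a' ha')
            (le_of_lt (lt_of_lt_of_le hδ (hδ_inf θ₀ hθ₀ a ha a' ha')))
        have h3 : ∫ a' in A, p θ₀ a a' * Qplus = Qplus := by
          rw [integral_mul_const, hp_dens θ₀ hθ₀ a ha, one_mul]
        linarith

  -- centering constants
  set c : ℕ → ℝ := fun n => Nat.rec 0
    (fun m cm => δ * (∫ a' in A, Qi m a') + (1 - ε) * cm) n with hc_def
  have hc0 : c 0 = 0 := rfl
  have hcs : ∀ n, c (n + 1) = δ * (∫ a' in A, Qi n a') + (1 - ε) * c n := fun n => rfl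
  -- contraction
  have hcontr : ∀ n, ∀ a ∈ A, |Qi n a - c n| ≤ Qplus * (1 - ε) ^ n := by
    intro n; induction n with
    | zero => intro a ha; rw [hc0, sub_zero, pow_zero, mul_one]; exact hQ_bdd a ha
    | succ n ih =>
      intro a ha
      have hq_pos : ∀ a' ∈ A, (0:ℝ) < p θ₀ a a' :=
        fun a' ha' => lt_of_lt_of_le hδ (hδ_inf θ₀ hθ₀ a ha a' ha')
      have hint_q : IntegrableOn (fun a' => p θ₀ a a') A volume :=
        (hsliceP θ₀ hθ₀ a ha).integrableOn_compact hA_compact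
      have hint_qQ : IntegrableOn (fun a' => p θ₀ a a' * Qi n a') A volume :=
        ((hsliceP θ₀ hθ₀ a ha).mul (hQiter n).1).integrableOn_compact hA_compact
      have hint_Q : IntegrableOn (fun a' => Qi n a') A volume :=
        (hQiter n).1.integrableOn_compact hA_compact
      have hiden : Qi (n + 1) a - c (n + 1)
          = ∫ a' in A, (p θ₀ a a' - δ) * (Qi n a' - c n) := by
        have expand : (fun a' => (p θ₀ a a' - δ) * (Qi n a' - c n))
            = fun a' => p θ₀ a a' * Qi n a' - δ * Qi n a'
                - c n * p θ₀ a a' + c n * δ := by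
          funext a'; ring
        rw [expand]
        have i1 : IntegrableOn (fun a' => p θ₀ a a' * Qi n a' - δ * Qi n a') A volume := by
          exact hint_qQ.sub (hint_Q.const_mul δ)
        have i2 : IntegrableOn
            (fun a' => p θ₀ a a' * Qi n a' - δ * Qi n a' - c n * p θ₀ a a') A volume := by
          exact i1.sub (hint_q.const_mul (c n))
        rw [integral_add i2 (integrableOn_const hA_fin),
          integral_sub i1 (hint_q.const_mul (c n)),
          integral_sub hint_qQ (hint_Q.const_mul δ)]
        rw [integral_const_mul, integral_const_mul, hp_dens θ₀ hθ₀ a ha,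
          setIntegral_const, smul_eq_mul, show volume.real A = mA from rfl]
        have hQs : Qi (n + 1) a = ∫ a' in A, p θ₀ a a' * Qi n a' := rfl
        rw [hQs, hcs n, hε_def]
        ring
      rw [hiden]
      have h1 : |∫ a' in A, (p θ₀ a a' - δ) * (Qi n a' - c n)|
          ≤ ∫ a' in A, |(p θ₀ a a' - δ) * (Qi n a' - c n)| := by
        simpa only [Real.norm_eq_abs] using norm_integral_le_integral_norm
          (μ := volume.restrict A) (fun a' => (p θ₀ a a' - δ) * (Qi n a' - c n))
      have hint_abs : IntegrableOn
          (fun a' => |(p θ₀ a a' - δ) * (Qi n a' - c n)|) A volume :=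
        (((hsliceP θ₀ hθ₀ a ha).sub continuousOn_const).mul
          ((hQiter n).1.sub continuousOn_const)).abs.integrableOn_compact hA_compact
      have hint_bd : IntegrableOn
          (fun a' => (p θ₀ a a' - δ) * (Qplus * (1 - ε) ^ n)) A volume :=
        (((hsliceP θ₀ hθ₀ a ha).sub continuousOn_const).mul
          continuousOn_const).integrableOn_compact hA_compact
      have h2 : ∫ a' in A, |(p θ₀ a a' - δ) * (Qi n a' - c n)|
          ≤ ∫ a' in A, (p θ₀ a a' - δ) * (Qplus * (1 - ε) ^ n) := by
        apply setIntegral_mono_on hint_abs hint_bd hA_meas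
        intro a' ha'
        rw [abs_mul, abs_of_nonneg (by linarith [hδ_inf θ₀ hθ₀ a ha a' ha'] : (0:ℝ) ≤ p θ₀ a a' - δ)]
        exact mul_le_mul_of_nonneg_left (ih a' ha')
          (by linarith [hδ_inf θ₀ hθ₀ a ha a' ha'])
      have h3 : ∫ a' in A, (p θ₀ a a' - δ) * (Qplus * (1 - ε) ^ n)
          = (1 - ε) * (Qplus * (1 - ε) ^ n) := by
        rw [integral_mul_const, integral_sub hint_q
          (integrableOn_const hA_fin),
          hp_dens θ₀ hθ₀ a ha, setIntegral_const, smul_eq_mul, show volume.real A = mA from rfl, hε_def]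
        ring
      calc |∫ a' in A, (p θ₀ a a' - δ) * (Qi n a' - c n)|
          ≤ (1 - ε) * (Qplus * (1 - ε) ^ n) := by rw [← h3]; exact h1.trans h2
        _ = Qplus * (1 - ε) ^ (n + 1) := by ring

  -- differentiation under the integral sign
  obtain ⟨r, hr_pos, hr_sub⟩ : ∃ r > 0, Metric.ball θ₀ r ⊆ I := by
    rcases Metric.isOpen_iff.1 hI_open θ₀ hθ₀ with ⟨r, hr, hsub⟩
    exact ⟨r, hr, hsub⟩
  have keyD : ∀ (f : (Fin d → ℝ) → ℝ) (M : ℝ), ContinuousOn f A → (∀ x ∈ A, |f x| ≤ M) →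
      ∀ a ∈ A, HasDerivAt (fun θ => ∫ a' in A, p θ a a' * f a')
        (∫ a' in A, dp θ₀ a a' * f a') θ₀ := by
    intro f M hf_cont hf_bdd a ha
    have hM : 0 ≤ M := (abs_nonneg _).trans (hf_bdd a₀ ha₀)
    have h := hasDerivAt_integral_of_dominated_loc_of_deriv_le
      (F := fun θ a' => p θ a a' * f a') (F' := fun θ a' => dp θ a a' * f a')
      (bound := fun _ => Cp * M) (μ := volume.restrict A) (Metric.ball_mem_nhds θ₀ hr_pos)
      (by
        filter_upwards [Metric.ball_mem_nhds θ₀ hr_pos] with θ hθ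
        exact ((hsliceP θ (hr_sub hθ) a ha).mul hf_cont).aestronglyMeasurable hA_meas)
      (((hsliceP θ₀ hθ₀ a ha).mul hf_cont).integrableOn_compact hA_compact)
      (((hsliceD θ₀ hθ₀ a ha).mul hf_cont).aestronglyMeasurable hA_meas)
      (by
        filter_upwards [haeA] with a' ha'
        intro θ hθ
        rw [Real.norm_eq_abs, abs_mul]
        exact mul_le_mul (hp_bdd θ (hr_sub hθ) a ha a' ha').2 (hf_bdd a' ha')
          (abs_nonneg _) hCp)
      (integrableOn_const hA_fin)
      (by
        filter_upwards [haeA] with a' ha'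
        intro θ hθ
        exact (hp_deriv θ (hr_sub hθ) a ha a' ha').mul_const (f a'))
    exact h.2
  have hDzero : ∀ a ∈ A, ∫ a' in A, dp θ₀ a a' = 0 := by
    intro a ha
    have h1 := keyD (fun _ => 1) 1 continuousOn_const (by intro x hx; simp) a ha
    have h2 : (fun _ : ℝ => (1:ℝ)) =ᶠ[nhds θ₀] (fun θ => ∫ a' in A, p θ a a' * 1) := by
      filter_upwards [hI_open.mem_nhds hθ₀] with θ hθ
      simp [hp_dens θ hθ a ha]
    have h3 : HasDerivAt (fun _ : ℝ => (1:ℝ)) (∫ a' in A, dp θ₀ a a' * 1) θ₀ :=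
      h1.congr_of_eventuallyEq h2
    have h4 := (hasDerivAt_const θ₀ (1:ℝ)).unique h3
    simpa using h4.symm
  have hgterm : ∀ n, ∀ a ∈ A, gterm A p Q θ₀ n a = ∫ a' in A, dp θ₀ a a' * Qi n a' := by
    intro n a ha
    exact (keyD (Qi n) Qplus (hQiter n).1 (hQiter n).2 a ha).deriv
  -- score bound
  have hD_bdd : ∀ a ∈ A, ∀ a' ∈ A, |dp θ₀ a a'| ≤ Splus * p θ₀ a a' := by
    intro a ha a' ha'
    have hpos : 0 < p θ₀ a a' := lt_of_lt_of_le hδ (hδ_inf θ₀ hθ₀ a ha a' ha')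
    have hlog : HasDerivAt (fun θ => Real.log (p θ a a')) (dp θ₀ a a' / p θ₀ a a') θ₀ :=
      (hp_deriv θ₀ hθ₀ a ha a' ha').log hpos.ne'
    have hb := hS_bdd a ha a' ha'
    rw [hlog.deriv, abs_div, abs_of_pos hpos] at hb
    calc |dp θ₀ a a'| = |dp θ₀ a a'| / p θ₀ a a' * p θ₀ a a' := by field_simp
      _ ≤ Splus * p θ₀ a a' := mul_le_mul_of_nonneg_right hb hpos.le
  -- gradient term bound
  have hg_bdd : ∀ n, ∀ a ∈ A, |gterm A p Q θ₀ n a| ≤ Splus * Qplus * (1 - ε) ^ n := by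
    intro n a ha
    rw [hgterm n a ha]
    have hint_DQ : IntegrableOn (fun a' => dp θ₀ a a' * Qi n a') A volume :=
      ((hsliceD θ₀ hθ₀ a ha).mul (hQiter n).1).integrableOn_compact hA_compact
    have hint_D : IntegrableOn (fun a' => dp θ₀ a a') A volume :=
      (hsliceD θ₀ hθ₀ a ha).integrableOn_compact hA_compact
    have hcenter : ∫ a' in A, dp θ₀ a a' * Qi n a'
        = ∫ a' in A, dp θ₀ a a' * (Qi n a' - c n) := by
      have expand : (fun a' => dp θ₀ a a' * (Qi n a' - c n))
          = fun a' => dp θ₀ a a' * Qi n a' - dp θ₀ a a' * c n := by funext a'; ring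
      rw [expand, integral_sub hint_DQ (hint_D.mul_const (c n)), integral_mul_const,
        hDzero a ha]
      ring
    rw [hcenter]
    have h1 : |∫ a' in A, dp θ₀ a a' * (Qi n a' - c n)|
        ≤ ∫ a' in A, |dp θ₀ a a' * (Qi n a' - c n)| := by
      simpa only [Real.norm_eq_abs] using norm_integral_le_integral_norm
        (μ := volume.restrict A) (fun a' => dp θ₀ a a' * (Qi n a' - c n))
    have hint_abs : IntegrableOn (fun a' => |dp θ₀ a a' * (Qi n a' - c n)|) A volume :=
      (((hsliceD θ₀ hθ₀ a ha).mul ((hQiter n).1.sub continuousOn_const)).abs).integrableOn_compact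
        hA_compact
    have hint_bd : IntegrableOn
        (fun a' => Splus * (Qplus * (1 - ε) ^ n) * p θ₀ a a') A volume :=
      (hsliceP θ₀ hθ₀ a ha).integrableOn_compact hA_compact |>.const_mul _
    have h2 : ∫ a' in A, |dp θ₀ a a' * (Qi n a' - c n)|
        ≤ ∫ a' in A, Splus * (Qplus * (1 - ε) ^ n) * p θ₀ a a' := by
      apply setIntegral_mono_on hint_abs hint_bd hA_meas
      intro a' ha'
      rw [abs_mul]
      calc |dp θ₀ a a'| * |Qi n a' - c n|
          ≤ Splus * p θ₀ a a' * (Qplus * (1 - ε) ^ n) :=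
            mul_le_mul (hD_bdd a ha a' ha') (hcontr n a' ha') (abs_nonneg _)
              (mul_nonneg hSplus (lt_of_lt_of_le hδ (hδ_inf θ₀ hθ₀ a ha a' ha')).le)
        _ = Splus * (Qplus * (1 - ε) ^ n) * p θ₀ a a' := by ring
    have h3 : ∫ a' in A, Splus * (Qplus * (1 - ε) ^ n) * p θ₀ a a'
        = Splus * (Qplus * (1 - ε) ^ n) := by
      rw [integral_const_mul, hp_dens θ₀ hθ₀ a ha, mul_one]
    calc |∫ a' in A, dp θ₀ a a' * (Qi n a' - c n)|
        ≤ Splus * (Qplus * (1 - ε) ^ n) := by rw [← h3]; exact h1.trans h2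
      _ = Splus * Qplus * (1 - ε) ^ n := by ring
  -- summability
  have hgeo : Summable (fun n : ℕ => Splus * Qplus * (1 - ε) ^ n) :=
    (summable_geometric_of_lt_one h1ε0 h1ε1).mul_left _
  have hsum : ∀ a ∈ A, Summable (fun n => gterm A p Q θ₀ n a) := by
    intro a ha
    exact Summable.of_norm_bounded hgeo
      (fun n => by simpa only [Real.norm_eq_abs] using hg_bdd n a ha)

  refine ⟨hε_pos, hε1, fun N => ?_⟩
  -- tail bound
  have htail : ∀ a ∈ A, |∑' n : ℕ, gterm A p Q θ₀ (N + 1 + n) a|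
      ≤ 2 * Splus * Qplus * (1 - ε) ^ (N + 1) / ε := by
    intro a ha
    have hs : HasSum (fun n : ℕ => Splus * Qplus * (1 - ε) ^ (N + 1) * (1 - ε) ^ n)
        (Splus * Qplus * (1 - ε) ^ (N + 1) * (1 - (1 - ε))⁻¹) :=
      (hasSum_geometric_of_lt_one h1ε0 h1ε1).mul_left _
    have hb : ∀ n : ℕ, ‖gterm A p Q θ₀ (N + 1 + n) a‖
        ≤ Splus * Qplus * (1 - ε) ^ (N + 1) * (1 - ε) ^ n := by
      intro n
      rw [Real.norm_eq_abs]
      calc |gterm A p Q θ₀ (N + 1 + n) a| ≤ Splus * Qplus * (1 - ε) ^ (N + 1 + n) :=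
          hg_bdd _ a ha
        _ = Splus * Qplus * (1 - ε) ^ (N + 1) * (1 - ε) ^ n := by rw [pow_add]; ring
    have h1 := tsum_of_norm_bounded hs hb
    rw [Real.norm_eq_abs] at h1
    have he : Splus * Qplus * (1 - ε) ^ (N + 1) * (1 - (1 - ε))⁻¹
        = Splus * Qplus * (1 - ε) ^ (N + 1) * ε⁻¹ := by norm_num
    rw [he] at h1
    have hx : 0 ≤ Splus * Qplus * (1 - ε) ^ (N + 1) :=
      mul_nonneg (mul_nonneg hSplus hQplus) (pow_nonneg h1ε0 _)
    calc |∑' n : ℕ, gterm A p Q θ₀ (N + 1 + n) a|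
        ≤ Splus * Qplus * (1 - ε) ^ (N + 1) * ε⁻¹ := h1
      _ ≤ 2 * Splus * Qplus * (1 - ε) ^ (N + 1) / ε := by
          rw [div_eq_mul_inv]
          apply mul_le_mul_of_nonneg_right _ (inv_nonneg.2 hε_pos.le)
          nlinarith
  refine ⟨htail, ?_⟩
  -- stationary density is integrable
  have hπs_int : Integrable (πs θ₀) (volume.restrict A) := by
    by_contra h
    have h0 := integral_undef h
    rw [hπs_dens θ₀ hθ₀] at h0
    exact one_ne_zero h0
  -- continuous version of gradient terms
  have gc_cont : ∀ n, ContinuousOn (fun a => ∫ a' in A, dp θ₀ a a' * Qi n a') A := by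
    intro n
    apply continuousOn_of_dominated (bound := fun _ => Cp * Qplus)
    · intro a haa
      exact ((hsliceD θ₀ hθ₀ a haa).mul (hQiter n).1).aestronglyMeasurable hA_meas
    · intro a haa
      filter_upwards [haeA] with a' ha'
      rw [Real.norm_eq_abs, abs_mul]
      exact mul_le_mul (hp_bdd θ₀ hθ₀ a haa a' ha').2 ((hQiter n).2 a' ha') (abs_nonneg _) hCp
    · exact integrableOn_const hA_fin
    · filter_upwards [haeA] with a' ha'
      exact (hsliceD' θ₀ hθ₀ a' ha').mul continuousOn_const
  have hsub : ∀ a ∈ A, Summable (fun n => gterm A p Q θ₀ (N + 1 + n) a) := by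
    intro a ha
    have h := (summable_nat_add_iff (N + 1)).2 (hsum a ha)
    exact h.congr (fun n => by rw [add_comm])
  -- measurability of the tail function
  have h_tail_meas : AEStronglyMeasurable
      (fun a => ∑' n : ℕ, gterm A p Q θ₀ (N + 1 + n) a) (volume.restrict A) := by
    apply aestronglyMeasurable_of_tendsto_ae (u := atTop)
      (f := fun k a => ∑ n ∈ Finset.range k, (∫ a' in A, dp θ₀ a a' * Qi (N + 1 + n) a'))
    · intro k
      exact (continuousOn_finset_sum _ (fun n _ => gc_cont (N + 1 + n))).aestronglyMeasurable
        hA_meas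
    · filter_upwards [haeA] with a ha
      have ht := (hsub a ha).hasSum.tendsto_sum_nat
      exact ht.congr (fun k => Finset.sum_congr rfl (fun n _ => hgterm _ a ha))
  have h_f1_meas : AEStronglyMeasurable
      (fun a => ∑ n ∈ Finset.range (N + 1), gterm A p Q θ₀ n a) (volume.restrict A) := by
    apply AEStronglyMeasurable.congr
      ((continuousOn_finset_sum _ (fun n _ => gc_cont n)).aestronglyMeasurable hA_meas)
    filter_upwards [haeA] with a ha
    exact Finset.sum_congr rfl (fun n _ => (hgterm n a ha).symm)
  have hsplit : ∀ a ∈ A, (∑' n : ℕ, gterm A p Q θ₀ n a)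
      = (∑ n ∈ Finset.range (N + 1), gterm A p Q θ₀ n a)
        + ∑' n : ℕ, gterm A p Q θ₀ (N + 1 + n) a := by
    intro a ha
    have h := Summable.sum_add_tsum_nat_add (f := fun n => gterm A p Q θ₀ n a) (N + 1) (hsum a ha)
    rw [← h]
    congr 1
    exact tsum_congr (fun n => by rw [add_comm])
  have h_f2_meas : AEStronglyMeasurable (fun a => ∑' n : ℕ, gterm A p Q θ₀ n a)
      (volume.restrict A) := by
    apply AEStronglyMeasurable.congr (h_f1_meas.add h_tail_meas)
    filter_upwards [haeA] with a ha
    exact (hsplit a ha).symm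
  -- bounds
  have h_f1_bdd : ∀ a ∈ A, |∑ n ∈ Finset.range (N + 1), gterm A p Q θ₀ n a|
      ≤ (N + 1 : ℕ) * (Splus * Qplus) := by
    intro a ha
    calc |∑ n ∈ Finset.range (N + 1), gterm A p Q θ₀ n a|
        ≤ ∑ n ∈ Finset.range (N + 1), |gterm A p Q θ₀ n a| :=
          Finset.abs_sum_le_sum_abs _ _
      _ ≤ ∑ n ∈ Finset.range (N + 1), Splus * Qplus := by
          apply Finset.sum_le_sum
          intro n _
          have hp1 : (1 - ε) ^ n ≤ 1 := pow_le_one₀ h1ε0 h1ε1.le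
          have := hg_bdd n a ha
          nlinarith [mul_nonneg hSplus hQplus]
      _ = (N + 1 : ℕ) * (Splus * Qplus) := by
          rw [Finset.sum_const, Finset.card_range, nsmul_eq_mul]
  have hmul_int : ∀ (h : (Fin d → ℝ) → ℝ) (B : ℝ),
      AEStronglyMeasurable h (volume.restrict A) → (∀ a ∈ A, |h a| ≤ B) →
      Integrable (fun a => πs θ₀ a * h a) (volume.restrict A) := by
    intro h B hm hb
    have h1 := Integrable.bdd_mul (f := h) (g := πs θ₀) (c := B) hπs_int hm
      (by filter_upwards [haeA] with a ha; rw [Real.norm_eq_abs]; exact hb a ha)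
    exact h1.congr (Eventually.of_forall (fun a => mul_comm _ _))
  have hB_nonneg : 0 ≤ 2 * Splus * Qplus * (1 - ε) ^ (N + 1) / ε := by
    apply div_nonneg _ hε_pos.le
    have := mul_nonneg (mul_nonneg hSplus hQplus) (pow_nonneg h1ε0 (N + 1))
    nlinarith
  have hint1 : Integrable
      (fun a => πs θ₀ a * ∑ n ∈ Finset.range (N + 1), gterm A p Q θ₀ n a)
      (volume.restrict A) := hmul_int _ _ h_f1_meas h_f1_bdd
  have h_f2_bdd : ∀ a ∈ A, |∑' n : ℕ, gterm A p Q θ₀ n a|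
      ≤ (N + 1 : ℕ) * (Splus * Qplus) + 2 * Splus * Qplus * (1 - ε) ^ (N + 1) / ε := by
    intro a ha
    rw [hsplit a ha]
    exact (abs_add_le _ _).trans (add_le_add (h_f1_bdd a ha) (htail a ha))
  have hint2 : Integrable (fun a => πs θ₀ a * ∑' n : ℕ, gterm A p Q θ₀ n a)
      (volume.restrict A) := hmul_int _ _ h_f2_meas h_f2_bdd
  have hint_tail : Integrable
      (fun a => πs θ₀ a * ∑' n : ℕ, gterm A p Q θ₀ (N + 1 + n) a)
      (volume.restrict A) := hmul_int _ _ h_tail_meas htail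
  have hdiff : (∫ a in A, πs θ₀ a * ∑' n : ℕ, gterm A p Q θ₀ n a)
      - (∫ a in A, πs θ₀ a * ∑ n ∈ Finset.range (N + 1), gterm A p Q θ₀ n a)
      = ∫ a in A, πs θ₀ a * ∑' n : ℕ, gterm A p Q θ₀ (N + 1 + n) a := by
    rw [← integral_sub hint2 hint1]
    apply integral_congr_ae
    filter_upwards [haeA] with a ha
    rw [hsplit a ha]
    ring
  rw [hdiff]
  have habs : |∫ a in A, πs θ₀ a * ∑' n : ℕ, gterm A p Q θ₀ (N + 1 + n) a|
      ≤ ∫ a in A, |πs θ₀ a * ∑' n : ℕ, gterm A p Q θ₀ (N + 1 + n) a| := by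
    simpa only [Real.norm_eq_abs] using norm_integral_le_integral_norm
      (μ := volume.restrict A)
      (fun a => πs θ₀ a * ∑' n : ℕ, gterm A p Q θ₀ (N + 1 + n) a)
  have hmono : ∫ a in A, |πs θ₀ a * ∑' n : ℕ, gterm A p Q θ₀ (N + 1 + n) a|
      ≤ ∫ a in A, πs θ₀ a * (2 * Splus * Qplus * (1 - ε) ^ (N + 1) / ε) := by
    apply integral_mono_ae hint_tail.abs
      (hπs_int.mul_const (2 * Splus * Qplus * (1 - ε) ^ (N + 1) / ε))
    filter_upwards [haeA] with a ha
    rw [abs_mul, abs_of_nonneg (hπs_nonneg θ₀ hθ₀ a ha)]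
    exact mul_le_mul_of_nonneg_left (htail a ha) (hπs_nonneg θ₀ hθ₀ a ha)
  have hval : ∫ a in A, πs θ₀ a * (2 * Splus * Qplus * (1 - ε) ^ (N + 1) / ε)
      = 2 * Splus * Qplus * (1 - ε) ^ (N + 1) / ε := by
    rw [integral_mul_const, hπs_dens θ₀ hθ₀, one_mul]
  linarith [habs, hmono]
end

section
/- Define F_N(θ) := ∫_A π^s_θ(a) Q_N(a) da for each N ≥ 0. Then lim_{N→∞} F_N'(θ₀) = 0; i.e., the derivative with respect to the parameter of the stationary expectation of the frozen N-step value function vanishes as the number of reasoning steps N tends to infinity. -/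
open MeasureTheory Filter

/-- With `F_N(θ) = ∫_A π^s_θ(a) Q_N(a) da` (where `Q_N` is the frozen
`N`-step value function of the chain with transition density `p_{θ₀}`), each `F_N` is
differentiable at `θ₀` and `F_N'(θ₀) → 0` as the number of reasoning steps `N → ∞`. -/
theorem frozen_value_derivative_vanishes
    (d : ℕ) (hd : 1 ≤ d)
    (A : Set (Fin d → ℝ)) (hA_compact : IsCompact A) (hA_pos : 0 < volume A)
    (I : Set ℝ) (hI_open : IsOpen I) (hI_conn : I.OrdConnected)
    (p dp : ℝ → (Fin d → ℝ) → (Fin d → ℝ) → ℝ)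
    (hp_cont : ContinuousOn
      (fun x : ℝ × ((Fin d → ℝ) × (Fin d → ℝ)) => p x.1 x.2.1 x.2.2) (I ×ˢ A ×ˢ A))
    (hdp_cont : ContinuousOn
      (fun x : ℝ × ((Fin d → ℝ) × (Fin d → ℝ)) => dp x.1 x.2.1 x.2.2) (I ×ˢ A ×ˢ A))
    (Cp : ℝ)
    (hp_bdd : ∀ θ ∈ I, ∀ a ∈ A, ∀ a' ∈ A, |p θ a a'| ≤ Cp ∧ |dp θ a a'| ≤ Cp)
    (hp_deriv : ∀ θ ∈ I, ∀ a ∈ A, ∀ a' ∈ A, HasDerivAt (fun t => p t a a') (dp θ a a') θ)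
    (hp_dens : ∀ θ ∈ I, ∀ a ∈ A, ∫ a' in A, p θ a a' = 1)
    (δ : ℝ) (hδ : 0 < δ)
    (hδ_inf : ∀ θ ∈ I, ∀ a ∈ A, ∀ a' ∈ A, δ ≤ p θ a a')
    (πs : ℝ → (Fin d → ℝ) → ℝ)
    (hπs_meas : ∀ θ ∈ I, Measurable (πs θ))
    (hπs_nonneg : ∀ θ ∈ I, ∀ a ∈ A, 0 ≤ πs θ a)
    (hπs_dens : ∀ θ ∈ I, ∫ a in A, πs θ a = 1)
    (hπs_stat : ∀ θ ∈ I, ∀ a' ∈ A, πs θ a' = ∫ a in A, πs θ a * p θ a a')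
    (dπs : ℝ → (Fin d → ℝ) → ℝ) (Cπ : ℝ)
    (hπs_deriv : ∀ θ ∈ I, ∀ a ∈ A, HasDerivAt (fun t => πs t a) (dπs θ a) θ)
    (hdπs_bdd : ∀ θ ∈ I, ∀ a ∈ A, |dπs θ a| ≤ Cπ)
    (Q : (Fin d → ℝ) → ℝ) (hQ_cont : ContinuousOn Q A)
    (Qplus : ℝ) (hQ_bdd : ∀ a ∈ A, |Q a| ≤ Qplus)
    (θ₀ : ℝ) (hθ₀ : θ₀ ∈ I) :
    (∀ N : ℕ, DifferentiableAt ℝ (fun θ => ∫ a in A, πs θ a * Qiter A (p θ₀) Q N a) θ₀) ∧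
    Tendsto (fun N : ℕ => deriv (fun θ => ∫ a in A, πs θ a * Qiter A (p θ₀) Q N a) θ₀)
      atTop (nhds 0) := by
  classical
  have hA_meas : MeasurableSet A := hA_compact.measurableSet
  obtain ⟨a₀, ha₀⟩ : A.Nonempty := nonempty_of_measure_ne_zero hA_pos.ne'
  have hvol_lt : volume A < ⊤ := hA_compact.measure_lt_top
  set vA : ℝ := (volume A).toReal with hvA
  have hvA_pos : 0 < vA := ENNReal.toReal_pos hA_pos.ne' hvol_lt.ne
  have hInt : ∀ f : (Fin d → ℝ) → ℝ, ContinuousOn f A → IntegrableOn f A volume :=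
    fun f hf => hf.integrableOn_compact hA_compact
  have hIconst : ∀ c : ℝ, IntegrableOn (fun _ => c) A volume :=
    fun c => integrableOn_const hvol_lt.ne
  -- continuity of p θ₀ in each variable
  have hp0 : ∀ a ∈ A, ContinuousOn (fun a' => p θ₀ a a') A := by
    intro a ha
    exact hp_cont.comp
      (Continuous.continuousOn (continuous_const.prodMk (continuous_const.prodMk continuous_id)))
      (fun a' ha' => ⟨hθ₀, ha, ha'⟩)
  have hp0' : ∀ a' ∈ A, ContinuousOn (fun a => p θ₀ a a') A := by
    intro a' ha'
    exact hp_cont.comp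
      (Continuous.continuousOn (continuous_const.prodMk (continuous_id.prodMk continuous_const)))
      (fun a ha => ⟨hθ₀, ha, ha'⟩)
  have hp_nonneg : ∀ a ∈ A, ∀ a' ∈ A, 0 ≤ p θ₀ a a' :=
    fun a ha a' ha' => hδ.le.trans (hδ_inf θ₀ hθ₀ a ha a' ha')
  have hQplus : 0 ≤ Qplus := (abs_nonneg _).trans (hQ_bdd a₀ ha₀)
  have hCπ : 0 ≤ Cπ := (abs_nonneg _).trans (hdπs_bdd θ₀ hθ₀ a₀ ha₀)
  have hCp : 0 ≤ Cp := (abs_nonneg _).trans (hp_bdd θ₀ hθ₀ a₀ ha₀ a₀ ha₀).1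
  -- continuity and boundedness of the iterates
  have hQN : ∀ N, ContinuousOn (Qiter A (p θ₀) Q N) A ∧
      (∀ a ∈ A, |Qiter A (p θ₀) Q N a| ≤ Qplus) := by
    intro N
    induction N with
    | zero => exact ⟨hQ_cont, hQ_bdd⟩
    | succ n ih =>
      obtain ⟨ihc, ihb⟩ := ih
      constructor
      · intro a₂ ha₂
        have key : Tendsto (fun a => ∫ a' in A, p θ₀ a a' * Qiter A (p θ₀) Q n a')
            (nhdsWithin a₂ A) (nhds (∫ a' in A, p θ₀ a₂ a' * Qiter A (p θ₀) Q n a')) := by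
          apply tendsto_integral_filter_of_dominated_convergence (fun _ => Cp * Qplus)
          · filter_upwards [self_mem_nhdsWithin] with a ha
            exact ((hp0 a ha).mul ihc).aestronglyMeasurable hA_meas
          · filter_upwards [self_mem_nhdsWithin] with a ha
            filter_upwards [ae_restrict_mem hA_meas] with a' ha'
            rw [Real.norm_eq_abs, abs_mul]
            exact mul_le_mul (hp_bdd θ₀ hθ₀ a ha a' ha').1 (ihb a' ha') (abs_nonneg _) hCp
          · exact hIconst _
          · filter_upwards [ae_restrict_mem hA_meas] with a' ha'
            exact ((hp0' a' ha' a₂ ha₂).tendsto).mul_const _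
        exact key
      · intro a ha
        have h1 : |∫ a' in A, p θ₀ a a' * Qiter A (p θ₀) Q n a'|
            ≤ ∫ a' in A, |p θ₀ a a' * Qiter A (p θ₀) Q n a'| := by
          have h' := norm_integral_le_integral_norm (μ := volume.restrict A)
            (fun a' => p θ₀ a a' * Qiter A (p θ₀) Q n a')
          simp only [Real.norm_eq_abs] at h'
          exact h'
        have h2 : ∫ a' in A, |p θ₀ a a' * Qiter A (p θ₀) Q n a'|
            ≤ ∫ a' in A, p θ₀ a a' * Qplus := by
          apply setIntegral_mono_on (((hp0 a ha).mul ihc).abs.integrableOn_compact hA_compact)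
            ((hInt _ (hp0 a ha)).mul_const Qplus) hA_meas
          intro a' ha'
          simp only [Pi.mul_apply]
          rw [abs_mul, abs_of_nonneg (hp_nonneg a ha a' ha')]
          exact mul_le_mul_of_nonneg_left (ihb a' ha') (hp_nonneg a ha a' ha')
        have h3 : ∫ a' in A, p θ₀ a a' * Qplus = Qplus := by
          rw [integral_mul_const, hp_dens θ₀ hθ₀ a ha, one_mul]
        show |Qiter A (p θ₀) Q (n+1) a| ≤ Qplus
        simp only [Qiter]
        linarith
  -- measurability of dπs θ₀ on A
  obtain ⟨ε, hε, hball⟩ := Metric.isOpen_iff.mp hI_open θ₀ hθ₀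
  set θseq : ℕ → ℝ := fun n => θ₀ + ε / ((n : ℝ) + 2) with hθseq
  have hθseq_mem : ∀ n, θseq n ∈ Metric.ball θ₀ ε := by
    intro n
    simp only [hθseq, Metric.mem_ball, Real.dist_eq, add_sub_cancel_left]
    rw [abs_of_pos (by positivity)]
    rw [div_lt_iff₀ (by positivity)]
    nlinarith [Nat.cast_nonneg (α := ℝ) n]
  have hθseq_ne : ∀ n, θseq n ≠ θ₀ := by
    intro n
    simp only [hθseq]
    have : (0:ℝ) < ε / ((n : ℝ) + 2) := by positivity
    intro h
    nlinarith [h]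
  have hθseq_tendsto : Tendsto θseq atTop (nhdsWithin θ₀ {θ₀}ᶜ) := by
    have h0 : Tendsto (fun n : ℕ => ε / ((n : ℝ) + 2)) atTop (nhds 0) := by
      apply Tendsto.div_atTop tendsto_const_nhds
      exact tendsto_atTop_add_const_right _ 2 tendsto_natCast_atTop_atTop
    have h1 : Tendsto θseq atTop (nhds θ₀) := by
      have := h0.const_add θ₀
      simpa using this
    exact tendsto_nhdsWithin_of_tendsto_nhds_of_eventually_within _ h1
      (Eventually.of_forall fun n => hθseq_ne n)
  have hdπs_meas : AEStronglyMeasurable (dπs θ₀) (volume.restrict A) := by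
    have : AEMeasurable (dπs θ₀) (volume.restrict A) := by
      apply aemeasurable_of_tendsto_metrizable_ae'
        (f := fun n a => (πs (θseq n) a - πs θ₀ a) / (θseq n - θ₀))
      · intro n
        exact (((hπs_meas _ (hball (hθseq_mem n))).sub (hπs_meas θ₀ hθ₀)).div_const _).aemeasurable
      · filter_upwards [ae_restrict_mem hA_meas] with a ha
        have hslope := hasDerivAt_iff_tendsto_slope.mp (hπs_deriv θ₀ hθ₀ a ha)
        have := hslope.comp hθseq_tendsto
        simpa [Function.comp_def, slope_def_field] using this
    exact this.aestronglyMeasurable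
  -- stationary density is integrable
  have hπs_int : ∀ θ ∈ I, IntegrableOn (πs θ) A volume := by
    intro θ hθ
    by_contra h
    have := hπs_dens θ hθ
    rw [integral_undef h] at this
    norm_num at this
  -- bounded a.e.-measurable functions are integrable on A
  have hIbd : ∀ (f : (Fin d → ℝ) → ℝ), AEStronglyMeasurable f (volume.restrict A) →
      ∀ (C : ℝ), (∀ a ∈ A, |f a| ≤ C) → IntegrableOn f A volume := by
    intro f hf C hC
    apply Integrable.mono' (hIconst C) hf
    filter_upwards [ae_restrict_mem hA_meas] with a ha
    simpa using hC a ha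
  -- differentiation under the integral sign
  have key : ∀ (g : (Fin d → ℝ) → ℝ) (C : ℝ), ContinuousOn g A → (∀ a ∈ A, |g a| ≤ C) →
      HasDerivAt (fun θ => ∫ a in A, πs θ a * g a) (∫ a in A, dπs θ₀ a * g a) θ₀ := by
    intro g C hgc hgb
    have hgm : AEStronglyMeasurable g (volume.restrict A) := hgc.aestronglyMeasurable hA_meas
    have := hasDerivAt_integral_of_dominated_loc_of_deriv_le (μ := volume.restrict A)
      (F := fun θ a => πs θ a * g a) (F' := fun θ a => dπs θ a * g a)
      (bound := fun _ => Cπ * C) (x₀ := θ₀) (Metric.ball_mem_nhds θ₀ hε) ?_ ?_ ?_ ?_ ?_ ?_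
    · exact this.2
    · filter_upwards [hI_open.mem_nhds hθ₀] with θ hθ
      exact ((hπs_meas θ hθ).aestronglyMeasurable.restrict).mul hgm
    · apply Integrable.mono' ((hπs_int θ₀ hθ₀).const_mul C)
        (((hπs_meas θ₀ hθ₀).aestronglyMeasurable.restrict).mul hgm)
      filter_upwards [ae_restrict_mem hA_meas] with a ha
      show ‖πs θ₀ a * g a‖ ≤ C * πs θ₀ a
      rw [Real.norm_eq_abs, abs_mul, abs_of_nonneg (hπs_nonneg θ₀ hθ₀ a ha), mul_comm C]
      exact mul_le_mul_of_nonneg_left (hgb a ha) (hπs_nonneg θ₀ hθ₀ a ha)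
    · exact hdπs_meas.mul hgm
    · filter_upwards [ae_restrict_mem hA_meas] with a ha
      intro θ hθ
      rw [Real.norm_eq_abs, abs_mul]
      exact mul_le_mul (hdπs_bdd θ (hball hθ) a ha) (hgb a ha) (abs_nonneg _) hCπ
    · exact hIconst _
    · filter_upwards [ae_restrict_mem hA_meas] with a ha
      intro θ hθ
      exact (hπs_deriv θ (hball hθ) a ha).mul_const (g a)
  -- the integral of dπs θ₀ over A vanishes
  have hzero : ∫ a in A, dπs θ₀ a = 0 := by
    have h1 := key (fun _ => (1:ℝ)) 1 continuousOn_const (by simp)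
    simp only [mul_one] at h1
    have h2 : HasDerivAt (fun θ => ∫ a in A, πs θ a) 0 θ₀ := by
      have heq : (fun θ => ∫ a in A, πs θ a) =ᶠ[nhds θ₀] fun _ => (1:ℝ) := by
        filter_upwards [hI_open.mem_nhds hθ₀] with θ hθ using hπs_dens θ hθ
      exact (hasDerivAt_const θ₀ (1:ℝ)).congr_of_eventuallyEq heq
    exact h1.unique h2
  -- Doeblin contraction factor
  set β : ℝ := 1 - δ * vA with hβ
  have hδvA_le : δ * vA ≤ 1 := by
    have h1 : ∫ _a' in A, δ ≤ ∫ a' in A, p θ₀ a₀ a' :=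
      setIntegral_mono_on (hIconst δ) (hInt _ (hp0 a₀ ha₀)) hA_meas
        (fun a' ha' => hδ_inf θ₀ hθ₀ a₀ ha₀ a' ha')
    rw [setIntegral_const, hp_dens θ₀ hθ₀ a₀ ha₀] at h1
    calc δ * vA = (volume A).toReal • δ := by rw [smul_eq_mul]; ring
    _ ≤ 1 := h1
  have hβ_nonneg : 0 ≤ β := by simp only [hβ]; linarith
  have hβ_lt : β < 1 := by
    simp only [hβ]
    nlinarith
  -- oscillation contraction
  have hosc : ∀ N, ∀ a ∈ A, ∀ b ∈ A,
      Qiter A (p θ₀) Q N a - Qiter A (p θ₀) Q N b ≤ β ^ N * (2 * Qplus) := by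
    intro N
    induction N with
    | zero =>
      intro a ha b hb
      have h1 := abs_le.mp (hQ_bdd a ha)
      have h2 := abs_le.mp (hQ_bdd b hb)
      simp only [Qiter, pow_zero, one_mul]
      linarith
    | succ n ih =>
      set QN := Qiter A (p θ₀) Q n with hQNdef
      obtain ⟨hQNc, hQNb⟩ := hQN n
      set M := sSup (QN '' A) with hM
      set m := sInf (QN '' A) with hm
      have hbddA : BddAbove (QN '' A) := by
        refine ⟨Qplus, ?_⟩
        rintro _ ⟨x, hx, rfl⟩
        exact (abs_le.mp (hQNb x hx)).2
      have hbddB : BddBelow (QN '' A) := by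
        refine ⟨-Qplus, ?_⟩
        rintro _ ⟨x, hx, rfl⟩
        exact (abs_le.mp (hQNb x hx)).1
      have hne : (QN '' A).Nonempty := ⟨QN a₀, ⟨a₀, ha₀, rfl⟩⟩
      have hle_M : ∀ x ∈ A, QN x ≤ M := fun x hx => le_csSup hbddA ⟨x, hx, rfl⟩
      have hm_le : ∀ x ∈ A, m ≤ QN x := fun x hx => csInf_le hbddB ⟨x, hx, rfl⟩
      have hMm : M - m ≤ β ^ n * (2 * Qplus) := by
        have hMle : M ≤ β ^ n * (2 * Qplus) + m := by
          apply csSup_le hne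
          rintro _ ⟨x, hx, rfl⟩
          have hxm : QN x - β ^ n * (2 * Qplus) ≤ m := by
            apply le_csInf hne
            rintro _ ⟨y, hy, rfl⟩
            linarith [ih x hx y hy]
          linarith
        linarith
      have hMm0 : 0 ≤ M - m := by linarith [hle_M a₀ ha₀, hm_le a₀ ha₀]
      intro a ha b hb
      set g := fun a' => min (p θ₀ a a') (p θ₀ b a') with hg
      have hgc : ContinuousOn g A := continuous_min.comp_continuousOn ((hp0 a ha).prodMk (hp0 b hb))
      have hgδ : ∀ a' ∈ A, δ ≤ g a' := fun a' ha' =>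
        le_min (hδ_inf θ₀ hθ₀ a ha a' ha') (hδ_inf θ₀ hθ₀ b hb a' ha')
      set t : ℝ := 1 - ∫ a' in A, g a' with ht
      have hIg := hInt g hgc
      have hIpa := hInt _ (hp0 a ha)
      have hIpb := hInt _ (hp0 b hb)
      have hIQ := hInt QN hQNc
      have ht_le : t ≤ β := by
        have hδg : δ * vA ≤ ∫ a' in A, g a' := by
          have h := setIntegral_mono_on (hIconst δ) hIg hA_meas hgδ
          rw [setIntegral_const] at h
          calc δ * vA = (volume A).toReal • δ := by rw [smul_eq_mul]; ring
          _ ≤ _ := h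
        simp only [ht, hβ]
        linarith
      have hsplit_a : ∫ a' in A, p θ₀ a a' * QN a'
          = (∫ a' in A, (p θ₀ a a' - g a') * QN a') + ∫ a' in A, g a' * QN a' := by
        rw [← integral_add (hInt (fun a' => (p θ₀ a a' - g a') * QN a') (((hp0 a ha).sub hgc).mul hQNc))
          (hInt (fun a' => g a' * QN a') (hgc.mul hQNc))]
        congr 1
        ext a'
        ring
      have hsplit_b : ∫ a' in A, p θ₀ b a' * QN a'
          = (∫ a' in A, (p θ₀ b a' - g a') * QN a') + ∫ a' in A, g a' * QN a' := by
        rw [← integral_add (hInt (fun a' => (p θ₀ b a' - g a') * QN a') (((hp0 b hb).sub hgc).mul hQNc))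
          (hInt (fun a' => g a' * QN a') (hgc.mul hQNc))]
        congr 1
        ext a'
        ring
      have hub : ∫ a' in A, (p θ₀ a a' - g a') * QN a' ≤ t * M := by
        have h1 : ∫ a' in A, (p θ₀ a a' - g a') * QN a'
            ≤ ∫ a' in A, (p θ₀ a a' - g a') * M := by
          apply setIntegral_mono_on (hInt _ (((hp0 a ha).sub hgc).mul hQNc))
            ((hIpa.sub hIg).mul_const M) hA_meas
          intro x hx
          have : 0 ≤ p θ₀ a x - g x := by
            have := min_le_left (p θ₀ a x) (p θ₀ b x)
            simp only [hg]
            linarith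
          exact mul_le_mul_of_nonneg_left (hle_M x hx) this
        have h2 : ∫ a' in A, (p θ₀ a a' - g a') * M = t * M := by
          rw [integral_mul_const, integral_sub hIpa hIg, hp_dens θ₀ hθ₀ a ha]
        linarith
      have hlb : t * m ≤ ∫ a' in A, (p θ₀ b a' - g a') * QN a' := by
        have h1 : ∫ a' in A, (p θ₀ b a' - g a') * m
            ≤ ∫ a' in A, (p θ₀ b a' - g a') * QN a' := by
          apply setIntegral_mono_on ((hIpb.sub hIg).mul_const m)
            (hInt _ (((hp0 b hb).sub hgc).mul hQNc)) hA_meas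
          intro x hx
          have : 0 ≤ p θ₀ b x - g x := by
            have := min_le_right (p θ₀ a x) (p θ₀ b x)
            simp only [hg]
            linarith
          exact mul_le_mul_of_nonneg_left (hm_le x hx) this
        have h2 : ∫ a' in A, (p θ₀ b a' - g a') * m = t * m := by
          rw [integral_mul_const, integral_sub hIpb hIg, hp_dens θ₀ hθ₀ b hb]
        linarith
      have hmain : Qiter A (p θ₀) Q (n + 1) a - Qiter A (p θ₀) Q (n + 1) b
          = (∫ a' in A, (p θ₀ a a' - g a') * QN a') - ∫ a' in A, (p θ₀ b a' - g a') * QN a' := by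
        simp only [Qiter, ← hQNdef]
        rw [hsplit_a, hsplit_b]
        ring
      rw [hmain]
      calc (∫ a' in A, (p θ₀ a a' - g a') * QN a') - ∫ a' in A, (p θ₀ b a' - g a') * QN a'
          ≤ t * M - t * m := by linarith
      _ = t * (M - m) := by ring
      _ ≤ β * (M - m) := mul_le_mul_of_nonneg_right ht_le hMm0
      _ ≤ β * (β ^ n * (2 * Qplus)) := mul_le_mul_of_nonneg_left hMm hβ_nonneg
      _ = β ^ (n + 1) * (2 * Qplus) := by ring
  -- assemble
  have hderiv : ∀ N, HasDerivAt (fun θ => ∫ a in A, πs θ a * Qiter A (p θ₀) Q N a)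
      (∫ a in A, dπs θ₀ a * Qiter A (p θ₀) Q N a) θ₀ :=
    fun N => key _ Qplus (hQN N).1 (hQN N).2
  refine ⟨fun N => (hderiv N).differentiableAt, ?_⟩
  have hbnd : ∀ N, ‖deriv (fun θ => ∫ a in A, πs θ a * Qiter A (p θ₀) Q N a) θ₀‖
      ≤ Cπ * (β ^ N * (2 * Qplus)) * vA := by
    intro N
    rw [(hderiv N).deriv]
    set QN := Qiter A (p θ₀) Q N with hQNdef
    obtain ⟨hQNc, hQNb⟩ := hQN N
    have hQNm : AEStronglyMeasurable QN (volume.restrict A) := hQNc.aestronglyMeasurable hA_meas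
    have hI1 : IntegrableOn (fun a => dπs θ₀ a * QN a) A volume := by
      apply hIbd _ (hdπs_meas.mul hQNm) (Cπ * Qplus)
      intro a ha
      show |dπs θ₀ a * QN a| ≤ Cπ * Qplus
      rw [abs_mul]
      exact mul_le_mul (hdπs_bdd θ₀ hθ₀ a ha) (hQNb a ha) (abs_nonneg _) hCπ
    have hI2 : IntegrableOn (fun a => dπs θ₀ a * (QN a - QN a₀)) A volume := by
      apply hIbd _ (hdπs_meas.mul (hQNm.sub aestronglyMeasurable_const)) (Cπ * (2 * Qplus))
      intro a ha
      show |dπs θ₀ a * (QN a - QN a₀)| ≤ Cπ * (2 * Qplus)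
      rw [abs_mul]
      refine mul_le_mul (hdπs_bdd θ₀ hθ₀ a ha) ?_ (abs_nonneg _) hCπ
      have h1 := abs_le.mp (hQNb a ha)
      have h2 := abs_le.mp (hQNb a₀ ha₀)
      rw [abs_le]
      constructor <;> linarith
    have hc : ∫ a in A, dπs θ₀ a * QN a = ∫ a in A, dπs θ₀ a * (QN a - QN a₀) := by
      have hd : (∫ a in A, dπs θ₀ a * QN a) - (∫ a in A, dπs θ₀ a * (QN a - QN a₀))
          = (∫ a in A, dπs θ₀ a) * QN a₀ := by
        rw [← integral_sub hI1 hI2]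
        have heq : ∀ a, dπs θ₀ a * QN a - dπs θ₀ a * (QN a - QN a₀) = dπs θ₀ a * QN a₀ :=
          fun a => by ring
        simp_rw [heq]
        exact integral_mul_const _ _
      rw [hzero, zero_mul] at hd
      linarith
    rw [hc]
    refine le_trans (norm_integral_le_of_norm_le (hIconst (Cπ * (β ^ N * (2 * Qplus)))) ?_) ?_
    · filter_upwards [ae_restrict_mem hA_meas] with a ha
      show ‖dπs θ₀ a * (QN a - QN a₀)‖ ≤ Cπ * (β ^ N * (2 * Qplus))
      rw [Real.norm_eq_abs, abs_mul]
      refine mul_le_mul (hdπs_bdd θ₀ hθ₀ a ha) ?_ (abs_nonneg _) hCπ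
      rw [abs_sub_le_iff]
      exact ⟨hosc N a ha a₀ ha₀, hosc N a₀ ha₀ a ha⟩
    · rw [setIntegral_const, smul_eq_mul]
      rw [mul_comm]
      exact le_rfl
  have hβt : Tendsto (fun N : ℕ => Cπ * (β ^ N * (2 * Qplus)) * vA) atTop (nhds 0) := by
    have h := tendsto_pow_atTop_nhds_zero_of_lt_one hβ_nonneg hβ_lt
    have h2 := ((h.const_mul (2 * Qplus)).const_mul Cπ).mul_const vA
    rw [show Cπ * (2 * Qplus * 0) * vA = 0 by ring] at h2
    exact h2.congr (fun N => by ring)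
  exact squeeze_zero_norm hbnd hβt
end

section
/- (Gradient of the n-step value through the reparameterized chain.) Fix n ≥ 1 and define, for ε = (ε_1, …, ε_n) ∈ (ℝ^k)^n and a₀ ∈ ℝ^d, the iterates a_i := f(a_{i−1}, ε_i) for i = 1, …, n, and G_n(a₀) := ∫ h(a_n) dγ_k^{⊗n}(ε). Then G_n is differentiable and its derivative at a₀ is given by the expectation of the chain-rule product of Jacobians: D G_n(a₀) = ∫ Dh(a_n) ∘ D_a f(a_{n−1}, ε_n) ∘ ⋯ ∘ D_a f(a₀, ε_1) dγ_k^{⊗n}(ε), where D_a f(a, ε) denotes the derivative of f in its first argument and Dh the derivative of h. -/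
open MeasureTheory ProbabilityTheory Filter

/-- The iterates of the reparameterized chain: `a_0 = a` and `a_i = f(a_{i-1}, ε_i)`;
`chainIter f n a ε` is the state `a_n` reached after `n` reparameterized steps driven
by the noise vectors `ε = (ε_1, …, ε_n)`. -/
noncomputable def chainIter {d k : ℕ}
    (f : EuclideanSpace ℝ (Fin d) → (Fin k → ℝ) → EuclideanSpace ℝ (Fin d)) :
    (n : ℕ) → EuclideanSpace ℝ (Fin d) → (Fin n → (Fin k → ℝ)) → EuclideanSpace ℝ (Fin d)
  | 0, a, _ => a
  | n + 1, a, ε => chainIter f n (f a (ε 0)) (fun i => ε i.succ)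

/-- The chain-rule product of Jacobians along the reparameterized chain:
`jacProd f Df n a ε = D_a f(a_{n−1}, ε_n) ∘ ⋯ ∘ D_a f(a_0, ε_1)`, where `a_0 = a`
and `a_i = f(a_{i-1}, ε_i)`. -/
noncomputable def jacProd {d k : ℕ}
    (f : EuclideanSpace ℝ (Fin d) → (Fin k → ℝ) → EuclideanSpace ℝ (Fin d))
    (Df : EuclideanSpace ℝ (Fin d) → (Fin k → ℝ) →
      (EuclideanSpace ℝ (Fin d) →L[ℝ] EuclideanSpace ℝ (Fin d))) :
    (n : ℕ) → EuclideanSpace ℝ (Fin d) → (Fin n → (Fin k → ℝ)) →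
      (EuclideanSpace ℝ (Fin d) →L[ℝ] EuclideanSpace ℝ (Fin d))
  | 0, _, _ => ContinuousLinearMap.id ℝ _
  | n + 1, a, ε => (jacProd f Df n (f a (ε 0)) (fun i => ε i.succ)).comp (Df a (ε 0))


section Aux

variable {d k : ℕ}
  (f : EuclideanSpace ℝ (Fin d) → (Fin k → ℝ) → EuclideanSpace ℝ (Fin d))
  (Df : EuclideanSpace ℝ (Fin d) → (Fin k → ℝ) →
    (EuclideanSpace ℝ (Fin d) →L[ℝ] EuclideanSpace ℝ (Fin d)))

lemma chainIter_continuous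
    (hf : Continuous fun x : EuclideanSpace ℝ (Fin d) × (Fin k → ℝ) => f x.1 x.2) :
    ∀ n, Continuous fun p : EuclideanSpace ℝ (Fin d) × (Fin n → (Fin k → ℝ)) =>
      chainIter f n p.1 p.2
  | 0 => continuous_fst
  | n + 1 => by
    have ih := chainIter_continuous hf n
    exact ih.comp (((hf.comp (continuous_fst.prodMk
      ((continuous_apply (0 : Fin (n+1))).comp continuous_snd))).prodMk
      (continuous_pi fun i => (continuous_apply i.succ).comp continuous_snd)))

lemma jacProd_continuous
    (hf : Continuous fun x : EuclideanSpace ℝ (Fin d) × (Fin k → ℝ) => f x.1 x.2)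
    (hDf : Continuous fun x : EuclideanSpace ℝ (Fin d) × (Fin k → ℝ) => Df x.1 x.2) :
    ∀ n, Continuous fun p : EuclideanSpace ℝ (Fin d) × (Fin n → (Fin k → ℝ)) =>
      jacProd f Df n p.1 p.2
  | 0 => continuous_const
  | n + 1 => by
    have ih := jacProd_continuous hf hDf n
    have hc1 : Continuous fun p : EuclideanSpace ℝ (Fin d) × (Fin (n+1) → (Fin k → ℝ)) =>
        jacProd f Df n (f p.1 (p.2 0)) (fun i => p.2 i.succ) :=
      ih.comp (((hf.comp (continuous_fst.prodMk
        ((continuous_apply (0 : Fin (n+1))).comp continuous_snd))).prodMk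
        (continuous_pi fun i => (continuous_apply i.succ).comp continuous_snd)))
    have hc2 : Continuous fun p : EuclideanSpace ℝ (Fin d) × (Fin (n+1) → (Fin k → ℝ)) =>
        Df p.1 (p.2 0) :=
      hDf.comp (continuous_fst.prodMk
        ((continuous_apply (0 : Fin (n+1))).comp continuous_snd))
    exact hc1.clm_comp hc2

lemma chainIter_hasFDerivAt
    (hDf : ∀ a ε, HasFDerivAt (fun b => f b ε) (Df a ε) a) :
    ∀ n (a : EuclideanSpace ℝ (Fin d)) (ε : Fin n → (Fin k → ℝ)),
      HasFDerivAt (fun b => chainIter f n b ε) (jacProd f Df n a ε) a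
  | 0, a, _ => hasFDerivAt_id a
  | n + 1, a, ε =>
    show HasFDerivAt (fun b => chainIter f n (f b (ε 0)) (fun i => ε i.succ))
      ((jacProd f Df n (f a (ε 0)) (fun i => ε i.succ)).comp (Df a (ε 0))) a from
    HasFDerivAt.comp (g := fun y => chainIter f n y (fun i => ε i.succ)) a
      (chainIter_hasFDerivAt hDf n (f a (ε 0)) (fun i => ε i.succ)) (hDf a (ε 0))

lemma jacProd_norm_le (L : ℝ) (hL0 : 0 ≤ L) (hL : ∀ a ε, ‖Df a ε‖ ≤ L) :
    ∀ n (a : EuclideanSpace ℝ (Fin d)) (ε : Fin n → (Fin k → ℝ)),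
      ‖jacProd f Df n a ε‖ ≤ L ^ n
  | 0, a, _ => by
    simp only [jacProd, pow_zero]
    exact ContinuousLinearMap.norm_id_le
  | n + 1, a, ε => by
    calc ‖jacProd f Df (n+1) a ε‖
        ≤ ‖jacProd f Df n (f a (ε 0)) (fun i => ε i.succ)‖ * ‖Df a (ε 0)‖ :=
          ContinuousLinearMap.opNorm_comp_le _ _
      _ ≤ L ^ n * L :=
          mul_le_mul (jacProd_norm_le L hL0 hL n _ _) (hL _ _) (norm_nonneg _)
            (pow_nonneg hL0 n)
      _ = L ^ (n + 1) := (pow_succ L n).symm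

end Aux

/-- **Gradient of the n-step value through the reparameterized chain.**
For `n ≥ 1`, the n-step value `G_n(a₀) = ∫ h(a_n) dγ_k^{⊗n}(ε)` of the reparameterized
chain `a_i = f(a_{i−1}, ε_i)` is differentiable, with derivative at `a₀` given by the
expectation of the chain-rule product of Jacobians:
`D G_n(a₀) = ∫ Dh(a_n) ∘ D_a f(a_{n−1}, ε_n) ∘ ⋯ ∘ D_a f(a₀, ε_1) dγ_k^{⊗n}(ε)`. -/
theorem reparameterized_nstep_value_gradient
    (d k : ℕ)
    (f : EuclideanSpace ℝ (Fin d) → (Fin k → ℝ) → EuclideanSpace ℝ (Fin d))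
    (hf_cont : Continuous fun x : EuclideanSpace ℝ (Fin d) × (Fin k → ℝ) => f x.1 x.2)
    (Df : EuclideanSpace ℝ (Fin d) → (Fin k → ℝ) →
      (EuclideanSpace ℝ (Fin d) →L[ℝ] EuclideanSpace ℝ (Fin d)))
    (hDf : ∀ (a : EuclideanSpace ℝ (Fin d)) (ε : Fin k → ℝ),
      HasFDerivAt (fun b => f b ε) (Df a ε) a)
    (hDf_cont : Continuous fun x : EuclideanSpace ℝ (Fin d) × (Fin k → ℝ) => Df x.1 x.2)
    (L : ℝ) (hDf_bdd : ∀ a ε, ‖Df a ε‖ ≤ L)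
    (h : EuclideanSpace ℝ (Fin d) → ℝ) (hh : ContDiff ℝ 1 h)
    (M : ℝ) (hh_bdd : ∀ x, |h x| ≤ M ∧ ‖fderiv ℝ h x‖ ≤ M)
    (n : ℕ) (hn : 1 ≤ n) :
    ∀ a₀ : EuclideanSpace ℝ (Fin d),
      HasFDerivAt
        (fun a => ∫ ε, h (chainIter f n a ε)
          ∂(Measure.pi fun _ : Fin n => Measure.pi fun _ : Fin k => gaussianReal 0 1))
        (∫ ε, (fderiv ℝ h (chainIter f n a₀ ε)).comp (jacProd f Df n a₀ ε)
          ∂(Measure.pi fun _ : Fin n => Measure.pi fun _ : Fin k => gaussianReal 0 1))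
        a₀ := by
  intro a₀
  set μ : Measure (Fin n → (Fin k → ℝ)) :=
    Measure.pi fun _ : Fin n => Measure.pi fun _ : Fin k => gaussianReal 0 1 with hμ
  have : IsProbabilityMeasure μ := by rw [hμ]; infer_instance
  have hL0 : 0 ≤ L := le_trans (norm_nonneg _)
    (hDf_bdd 0 0)
  have hM0 : 0 ≤ M := le_trans (abs_nonneg _) ((hh_bdd 0).1)
  have hchain := chainIter_hasFDerivAt f Df hDf n
  have hcont := chainIter_continuous f hf_cont n
  have hjcont := jacProd_continuous f Df hf_cont hDf_cont n
  have hjnorm := jacProd_norm_le f Df L hL0 hDf_bdd n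
  have hder : ∀ (x : EuclideanSpace ℝ (Fin d)) (ε : Fin n → (Fin k → ℝ)),
      HasFDerivAt (fun a => h (chainIter f n a ε))
        ((fderiv ℝ h (chainIter f n x ε)).comp (jacProd f Df n x ε)) x := fun x ε =>
    (((hh.differentiable one_ne_zero) (chainIter f n x ε)).hasFDerivAt).comp x (hchain x ε)
  apply hasFDerivAt_integral_of_dominated_of_fderiv_le (s := Metric.ball a₀ 1) (bound := fun _ => M * L ^ n)
    (F := fun a ε => h (chainIter f n a ε))
    (F' := fun x ε => (fderiv ℝ h (chainIter f n x ε)).comp (jacProd f Df n x ε))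
    (Metric.ball_mem_nhds a₀ one_pos)
  · filter_upwards with x
    exact (hh.continuous.comp (hcont.comp
      (Continuous.prodMk continuous_const continuous_id))).aestronglyMeasurable
  · apply Integrable.mono' (integrable_const M)
    · exact (hh.continuous.comp (hcont.comp
        (Continuous.prodMk continuous_const continuous_id))).aestronglyMeasurable
    · filter_upwards with ε
      simpa [Real.norm_eq_abs] using (hh_bdd (chainIter f n a₀ ε)).1
  · exact (((hh.continuous_fderiv one_ne_zero).comp (hcont.comp
      (Continuous.prodMk continuous_const continuous_id))).clm_comp
      (hjcont.comp (Continuous.prodMk continuous_const continuous_id))).aestronglyMeasurable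
  · filter_upwards with ε x _
    calc ‖(fderiv ℝ h (chainIter f n x ε)).comp (jacProd f Df n x ε)‖
        ≤ ‖fderiv ℝ h (chainIter f n x ε)‖ * ‖jacProd f Df n x ε‖ :=
          ContinuousLinearMap.opNorm_comp_le _ _
      _ ≤ M * L ^ n :=
          mul_le_mul ((hh_bdd _).2) (hjnorm x ε) (norm_nonneg _) hM0
  · exact integrable_const _
  · filter_upwards with ε x _
    exact hder x ε
end
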